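/- arXiv:1104.1832 — 5 statements merged into one kernel-verified Lean document; each statement's English description precedes it below -/
import Mathlib

section
/- The ring H*_T(𝒜_n) is generated as a ring by the 2n elements τ_1,…,τ_n, t_1,…,t_n. -/
open MvPolynomial

/-- `R = ℤ[t_1,…,t_n]`. -/
abbrev Rn (n : ℕ) : Type := MvPolynomial (Fin n) ℤ

/-- Membership in the graph cohomology `H^*_T(𝒜_n)`: for every vertex `w` and every edge
`{w, w·(i,j)}`, the difference `h(w) - h(w·(i,j))` is divisible by `t_{w(i)} - t_{w(j)}`. -/
def condA (n : ℕ) (h : Equiv.Perm (Fin n) → Rn n) : Prop :=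
  ∀ (w : Equiv.Perm (Fin n)) (i j : Fin n), i ≠ j →
    (X (w i) - X (w j) : Rn n) ∣ h w - h (w * Equiv.swap i j)

/-- `τ_i(w) = t_{w(i)}`. -/
noncomputable def tauA (n : ℕ) (i : Fin n) : Equiv.Perm (Fin n) → Rn n := fun w => X (w i)

/-- The constant function `t_i`. -/
noncomputable def tcA (n : ℕ) (i : Fin n) : Equiv.Perm (Fin n) → Rn n := fun _ => X i

/-!
Induct on a set `P` of positions: every `h` satisfying the GKM conditions on the coset `w₀ S_P`
agrees there with an element of the subring generated by the `τ_i` and `t_i`. Adding a position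
`p` splits the coset into the fibres `w p = a`, each a coset of `S_P`, which are handled one at a
time as in Newton interpolation. If `h` vanishes on the fibres with `w p ∈ B`, the GKM edges into
them show that `∏_{b ∈ B} (t_a - t_b)` divides `h` on the fibre `w p = a`. The quotient still
satisfies the GKM conditions of that fibre, because the primes `t_{w i} - t_{w j}` are coprime to
every `t_a - t_b`; by induction it agrees with some `q` there, and `h - q ∏_{b ∈ B} (τ_p - t_b)`
vanishes on one more fibre.
-/

open Equiv Finset

section DifferencesOfVariables

variable {σ R : Type*} [CommRing R] [IsDomain R]

theorem prime_X_sub_X {a b : σ} (hab : a ≠ b) : Prime (X a - X b : MvPolynomial σ R) := by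
  classical
  let e := (renameEquiv R (Equiv.optionSubtypeNe a).symm).trans (optionEquivLeft R {c // c ≠ a})
  have he : e (X a - X b) = Polynomial.X - Polynomial.C (X ⟨b, hab.symm⟩) := by
    simp [e, optionEquivLeft_X_none, optionEquivLeft_X_some, Equiv.optionSubtypeNe_symm_apply,
      hab.symm]
  rw [← MulEquiv.prime_iff e, he]
  exact Polynomial.prime_X_sub_C _

theorem isRelPrime_X_sub_X {a b c d : σ} (hab : a ≠ b) (hcd : c ≠ d) (hca : c ≠ a) (hcb : c ≠ b) :
    IsRelPrime (X a - X b : MvPolynomial σ R) (X c - X d) := by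
  classical
  refine (prime_X_sub_X hab).irreducible.isRelPrime_iff_not_dvd.mpr fun hdvd => ?_
  set f := Function.update id a b
  have hfa : f a = b := Function.update_self ..
  have hfb : f b = b := Function.update_of_ne hab.symm ..
  have hfc : f c = c := Function.update_of_ne hca ..
  have hfd : f d ≠ c := by
    simp only [f, Function.update_apply, id]
    split_ifs <;> [exact hcb.symm; exact hcd.symm]
  have := map_dvd (rename f) hdvd
  simp only [map_sub, rename_X, hfa, hfb, hfc, sub_self, zero_dvd_iff, sub_eq_zero] at this
  exact hfd (X_injective this).symm

theorem isRelPrime_X_sub_X_prod [DecompositionMonoid (MvPolynomial σ R)] {a c d : σ}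
    {B : Finset σ} (hcd : c ≠ d) (hca : c ≠ a) (hda : d ≠ a) (haB : a ∉ B) :
    IsRelPrime (X c - X d : MvPolynomial σ R) (∏ b ∈ B, (X a - X b)) :=
  IsRelPrime.prod_right fun _ hb =>
    isRelPrime_X_sub_X hcd (fun hab => haB (hab ▸ hb)) hca.symm hda.symm

theorem prod_X_sub_X_dvd [DecompositionMonoid (MvPolynomial σ R)] {a : σ} {B : Finset σ}
    {y : MvPolynomial σ R} (haB : a ∉ B) (hdvd : ∀ b ∈ B, X a - X b ∣ y) :
    ∏ b ∈ B, (X a - X b) ∣ y := by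
  refine Finset.prod_dvd_of_isRelPrime (fun b hb c hc hbc => ?_) hdvd
  have hba : b ≠ a := fun h => haB (h ▸ hb)
  have hca : c ≠ a := fun h => haB (h ▸ hc)
  simpa only [Function.onFun, neg_sub] using
    (isRelPrime_X_sub_X hba.symm hca hca hbc.symm).neg_right (x := X a - X b) (y := X c - X a)

end DifferencesOfVariables

section EdgeSubring

variable {α R : Type*} [CommRing R]

noncomputable def edgeSubring (x y : α) (d : R) : Subring (α → R) :=
  ((Ideal.Quotient.mk (Ideal.span {d})).comp (Pi.evalRingHom _ x)).eqLocus
    ((Ideal.Quotient.mk (Ideal.span {d})).comp (Pi.evalRingHom _ y))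

theorem mem_edgeSubring {x y : α} {d : R} {h : α → R} :
    h ∈ edgeSubring x y d ↔ d ∣ h x - h y := by
  simp [edgeSubring, RingHom.mem_eqLocus, Ideal.Quotient.eq, Ideal.mem_span_singleton]

end EdgeSubring

variable {n : ℕ}

/-- The coset `w₀ S_P`, where `S_P` is the group of permutations supported on `P`. -/
def permCoset (w₀ : Perm (Fin n)) (P : Finset (Fin n)) : Set (Perm (Fin n)) :=
  {w | ∀ i ∉ P, w i = w₀ i}

section PermCoset

variable {w₀ w₁ w : Perm (Fin n)} {P Q : Finset (Fin n)}

theorem permCoset_empty (w₀ : Perm (Fin n)) : permCoset w₀ ∅ = {w₀} := by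
  ext w
  simp [permCoset, Equiv.ext_iff]

theorem permCoset_univ (w₀ : Perm (Fin n)) : permCoset w₀ univ = Set.univ := by
  ext w
  simp [permCoset]

theorem mul_swap_mem_permCoset (hw : w ∈ permCoset w₀ P) {i j : Fin n} (hi : i ∈ P) (hj : j ∈ P) :
    w * swap i j ∈ permCoset w₀ P := fun k hk => by
  rw [Perm.mul_apply, swap_apply_of_ne_of_ne (ne_of_mem_of_not_mem hi hk).symm
    (ne_of_mem_of_not_mem hj hk).symm, hw k hk]

theorem permCoset_subset_permCoset (hw₁ : w₁ ∈ permCoset w₀ Q) (hPQ : P ⊆ Q) :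
    permCoset w₁ P ⊆ permCoset w₀ Q := fun _ hw i hi =>
  (hw i fun h => hi (hPQ h)).trans (hw₁ i hi)

theorem image_eq_of_mem_permCoset (hw : w ∈ permCoset w₀ P) : P.image w = P.image w₀ := by
  refine Finset.eq_of_subset_of_card_le (fun b hb => ?_) ?_
  · obtain ⟨i, hi, rfl⟩ := Finset.mem_image.mp hb
    refine Finset.mem_image.mpr ⟨w₀.symm (w i), ?_, w₀.apply_symm_apply _⟩
    by_contra hk
    have : w (w₀.symm (w i)) = w i := by rw [hw _ hk, w₀.apply_symm_apply]
    exact hk (by rwa [w.injective this])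
  · rw [card_image_of_injective _ w.injective, card_image_of_injective _ w₀.injective]

theorem mem_permCoset_iff_of_mem_permCoset_insert {p : Fin n} (hp : p ∉ P)
    (hw₁ : w₁ ∈ permCoset w₀ (insert p P)) :
    w ∈ permCoset w₁ P ↔ w ∈ permCoset w₀ (insert p P) ∧ w p = w₁ p := by
  refine ⟨fun hw => ⟨permCoset_subset_permCoset hw₁ (subset_insert p P) hw, hw p hp⟩, ?_⟩
  rintro ⟨hw, hwp⟩ i hi
  by_cases hip : i = p
  · rwa [hip]
  · have hi' : i ∉ insert p P := by simp [hip, hi]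
    rw [hw i hi', hw₁ i hi']

end PermCoset

/-- The graph cohomology of the subgraph of `𝒜_n` spanned by `permCoset w₀ P`. -/
noncomputable def gkmSubring (w₀ : Perm (Fin n)) (P : Finset (Fin n)) :
    Subring (Perm (Fin n) → Rn n) :=
  ⨅ (w ∈ permCoset w₀ P) (i ∈ P) (j ∈ P) (_ : i ≠ j),
    edgeSubring w (w * swap i j) (X (w i) - X (w j))

theorem mem_gkmSubring {w₀ : Perm (Fin n)} {P : Finset (Fin n)} {h : Perm (Fin n) → Rn n} :
    h ∈ gkmSubring w₀ P ↔ ∀ w ∈ permCoset w₀ P, ∀ i ∈ P, ∀ j ∈ P, i ≠ j →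
      (X (w i) - X (w j) : Rn n) ∣ h w - h (w * swap i j) := by
  simp only [gkmSubring, Subring.mem_iInf, mem_edgeSubring]

theorem condA_iff_mem_gkmSubring {h : Perm (Fin n) → Rn n} : condA n h ↔ h ∈ gkmSubring 1 univ := by
  simp [mem_gkmSubring, condA, permCoset_univ]

theorem gkmSubring_mono {w₀ w₁ : Perm (Fin n)} {P Q : Finset (Fin n)}
    (hw₁ : w₁ ∈ permCoset w₀ Q) (hPQ : P ⊆ Q) : gkmSubring w₀ Q ≤ gkmSubring w₁ P := by
  intro h hh
  rw [mem_gkmSubring] at hh ⊢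
  exact fun w hw i hi j hj => hh w (permCoset_subset_permCoset hw₁ hPQ hw) i (hPQ hi) j (hPQ hj)

noncomputable abbrev tauSubring (n : ℕ) : Subring (Perm (Fin n) → Rn n) :=
  Subring.closure (Set.range (tauA n) ∪ Set.range (tcA n))

theorem tauSubring_le_gkmSubring (w₀ : Perm (Fin n)) (P : Finset (Fin n)) :
    tauSubring n ≤ gkmSubring w₀ P := by
  rw [Subring.closure_le]
  rintro _ (⟨k, rfl⟩ | ⟨k, rfl⟩) <;> rw [SetLike.mem_coe, mem_gkmSubring] <;>
    intro w _ i _ j _ _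
  · simp only [tauA, Perm.mul_apply]
    rcases eq_or_ne k i with rfl | hki
    · simp
    rcases eq_or_ne k j with rfl | hkj
    · exact ⟨-1, by simp⟩
    · simp [swap_apply_of_ne_of_ne hki hkj]
  · simp [tcA]

theorem const_mem_tauSubring (r : Rn n) : (fun _ => r : Perm (Fin n) → Rn n) ∈ tauSubring n := by
  induction r using MvPolynomial.induction_on with
  | C a => simp [← Pi.intCast_def]
  | add p q hp hq => exact add_mem hp hq
  | mul_X p i hp => exact mul_mem hp (Subring.subset_closure (Or.inr ⟨i, rfl⟩))

variable {w₀ w₁ : Perm (Fin n)} {P Q B : Finset (Fin n)} {p : Fin n} {h g : Perm (Fin n) → Rn n}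

/-- The factor `X (w p) - X b` comes from the edge `{w, w·(p, j)}` with `w j = b`. -/
theorem prod_X_sub_X_dvd_of_eq_zero (hh : h ∈ gkmSubring w₀ Q) (hp : p ∈ Q) {w : Perm (Fin n)}
    (hw : w ∈ permCoset w₀ Q) (hB : B ⊆ Q.image w₀) (hpB : w p ∉ B)
    (hvan : ∀ v ∈ permCoset w₀ Q, v p ∈ B → h v = 0) : ∏ b ∈ B, (X (w p) - X b : Rn n) ∣ h w := by
  refine prod_X_sub_X_dvd hpB fun b hb => ?_
  obtain ⟨j, hj, rfl⟩ := mem_image.mp ((image_eq_of_mem_permCoset hw).symm ▸ hB hb)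
  have hpj : p ≠ j := fun h => hpB (h ▸ hb)
  have hzero : h (w * swap p j) = 0 :=
    hvan _ (mul_swap_mem_permCoset hw hp hj) (by rwa [Perm.mul_apply, swap_apply_left])
  simpa [hzero] using mem_gkmSubring.mp hh w hw p hp j hj hpj

theorem mem_gkmSubring_of_eq_mul (hh : h ∈ gkmSubring w₁ P) (hp : p ∉ P) (hpB : w₁ p ∉ B)
    (hhg : ∀ w ∈ permCoset w₁ P, h w = (∏ b ∈ B, (X (w₁ p) - X b)) * g w) :
    g ∈ gkmSubring w₁ P := by
  rw [mem_gkmSubring] at hh ⊢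
  intro w hw i hi j hj hij
  have hwp : w p = w₁ p := hw p hp
  have hcoprime : IsRelPrime (X (w i) - X (w j) : Rn n) (∏ b ∈ B, (X (w₁ p) - X b)) :=
    isRelPrime_X_sub_X_prod (w.injective.ne hij) (hwp ▸ w.injective.ne (ne_of_mem_of_not_mem hi hp))
      (hwp ▸ w.injective.ne (ne_of_mem_of_not_mem hj hp)) hpB
  refine hcoprime.dvd_of_dvd_mul_left ?_
  rw [mul_sub, ← hhg w hw, ← hhg _ (mul_swap_mem_permCoset hw hi hj)]
  exact hh w hw i hi j hj hij

/-- `k` is `q ∏_{b ∈ B} (τ_p - t_b)`, with `q` from the induction hypothesis applied to the quotient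
of `h` by `∏_{b ∈ B} (t_{w₁ p} - t_b)` on the fibre through `w₁`. -/
theorem exists_mem_tauSubring_eqOn_fibre (hp : p ∉ P)
    (IH : ∀ w₀, ∀ g ∈ gkmSubring w₀ P, ∃ q ∈ tauSubring n, Set.EqOn g q (permCoset w₀ P))
    (hh : h ∈ gkmSubring w₀ (insert p P)) (hw₁ : w₁ ∈ permCoset w₀ (insert p P))
    (hB : B ⊆ (insert p P).image w₀) (hpB : w₁ p ∉ B)
    (hvan : ∀ v ∈ permCoset w₀ (insert p P), v p ∈ B → h v = 0) :
    ∃ k ∈ tauSubring n, Set.EqOn h k (permCoset w₁ P) ∧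
      ∀ v ∈ permCoset w₀ (insert p P), v p ∈ B → k v = 0 := by
  set D : Rn n := ∏ b ∈ B, (X (w₁ p) - X b)
  have hfibre := fun w => mem_permCoset_iff_of_mem_permCoset_insert (w := w) hp hw₁
  have hdvd : ∀ w ∈ permCoset w₁ P, D ∣ h w := fun w hw => by
    obtain ⟨hw, hwp⟩ := (hfibre w).mp hw
    simpa [D, hwp] using
      prod_X_sub_X_dvd_of_eq_zero hh (mem_insert_self p P) hw hB (hwp ▸ hpB) hvan
  choose! g hg using hdvd
  obtain ⟨q, hq, hgq⟩ :=
    IH w₁ g (mem_gkmSubring_of_eq_mul (gkmSubring_mono hw₁ (subset_insert p P) hh) hp hpB hg)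
  set f : Perm (Fin n) → Rn n := ∏ b ∈ B, (tauA n p - tcA n b)
  have hf : f ∈ tauSubring n := prod_mem fun b _ =>
    sub_mem (Subring.subset_closure (Or.inl ⟨p, rfl⟩)) (Subring.subset_closure (Or.inr ⟨b, rfl⟩))
  have hf_apply : ∀ v, f v = ∏ b ∈ B, (X (v p) - X b : Rn n) := fun v => by
    simp [f, Finset.prod_apply, tauA, tcA]
  refine ⟨f * q, mul_mem hf hq, fun w hw => ?_, fun v _ hvB => ?_⟩
  · rw [hg w hw, Pi.mul_apply, hf_apply, hw p hp, hgq hw]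
  · rw [Pi.mul_apply, hf_apply, prod_eq_zero hvB (sub_self _), zero_mul]

theorem exists_mem_tauSubring_eqOn_insert (hp : p ∉ P)
    (IH : ∀ w₀, ∀ g ∈ gkmSubring w₀ P, ∃ q ∈ tauSubring n, Set.EqOn g q (permCoset w₀ P))
    (T : Finset (Fin n)) (hh : h ∈ gkmSubring w₀ (insert p P))
    (hvan : ∀ v ∈ permCoset w₀ (insert p P), v p ∉ T → h v = 0) :
    ∃ q ∈ tauSubring n, Set.EqOn h q (permCoset w₀ (insert p P)) := by
  induction T using Finset.induction_on generalizing h with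
  | empty => exact ⟨0, zero_mem _, fun v hv => hvan v hv (notMem_empty _)⟩
  | insert a T _ ih =>
    by_cases hfibre : ∃ w₁ ∈ permCoset w₀ (insert p P), w₁ p = a
    · obtain ⟨w₁, hw₁, rfl⟩ := hfibre
      set B := (insert p P).image w₀ \ insert (w₁ p) T
      obtain ⟨k, hk, hhk, hkB⟩ := exists_mem_tauSubring_eqOn_fibre hp IH hh hw₁ sdiff_subset
        (fun hmem => (mem_sdiff.mp hmem).2 (mem_insert_self _ _))
        (fun v hv hvB => hvan v hv (mem_sdiff.mp hvB).2)
      have hvan' : ∀ v ∈ permCoset w₀ (insert p P), v p ∉ T → (h - k) v = 0 := by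
        intro v hv hvT
        by_cases hva : v p = w₁ p
        · have hvw₁ := (mem_permCoset_iff_of_mem_permCoset_insert hp hw₁).mpr ⟨hv, hva⟩
          rw [Pi.sub_apply, hhk hvw₁, sub_self]
        · have hvB : v p ∈ B := mem_sdiff.mpr ⟨image_eq_of_mem_permCoset hv ▸
            mem_image_of_mem v (mem_insert_self p P), by simp [hva, hvT]⟩
          rw [Pi.sub_apply, hvan v hv (by simp [hva, hvT]), hkB v hv hvB, sub_self]
      obtain ⟨q, hq, hhq⟩ := ih (sub_mem hh (tauSubring_le_gkmSubring w₀ _ hk)) hvan'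
      exact ⟨q + k, add_mem hq hk, fun v hv => by simpa [sub_eq_iff_eq_add] using hhq hv⟩
    · exact ih hh fun v hv hvT => hvan v hv (by simp_all)

theorem exists_mem_tauSubring_eqOn (P : Finset (Fin n)) :
    ∀ w₀, ∀ h ∈ gkmSubring w₀ P, ∃ q ∈ tauSubring n, Set.EqOn h q (permCoset w₀ P) := by
  induction P using Finset.induction_on with
  | empty =>
    intro w₀ h _
    exact ⟨fun _ => h w₀, const_mem_tauSubring _, by simp [permCoset_empty]⟩
  | insert p P hp IH =>
    intro w₀ h hh
    exact exists_mem_tauSubring_eqOn_insert hp IH univ hh (by simp)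

theorem graphCohomology_typeA_generated_general (n : ℕ) :
    {h : Equiv.Perm (Fin n) → Rn n | condA n h} =
      (Subring.closure (Set.range (tauA n) ∪ Set.range (tcA n)) :
        Set (Equiv.Perm (Fin n) → Rn n)) := by
  ext h
  rw [Set.mem_ofPred_eq, SetLike.mem_coe, condA_iff_mem_gkmSubring]
  refine ⟨fun hh => ?_, fun hh => tauSubring_le_gkmSubring 1 univ hh⟩
  obtain ⟨q, hq, hhq⟩ := exists_mem_tauSubring_eqOn univ 1 h hh
  rw [permCoset_univ, Set.eqOn_univ] at hhq
  rwa [hhq]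

/-- `H^*_T(𝒜_n)` is generated as a ring by `τ_1,…,τ_n, t_1,…,t_n`. -/
theorem graphCohomology_typeA_generated (n : ℕ) (hn : 1 ≤ n) :
    {h : Equiv.Perm (Fin n) → Rn n | condA n h} =
      (Subring.closure (Set.range (tauA n) ∪ Set.range (tcA n)) :
        Set (Equiv.Perm (Fin n) → Rn n)) :=
  graphCohomology_typeA_generated_general n
end

section
/- The quotient ring T* = ℤ[x_1,…,x_n,y_1,…,y_n]/(e_i(x_1,…,x_n) − e_i(y_1,…,y_n) : i = 1,…,n) is generated as a module over the subring generated by the images of y_1,…,y_n by the images of the monomials ∏_{p=1}^{n−1} x_p^{i_p} with 0 ≤ i_p ≤ n − p for each p. -/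
open MvPolynomial

/-- The `i`-th elementary symmetric polynomial in the values `g k`. -/
noncomputable def eS {σ : Type*} [Fintype σ] {R : Type*} [CommRing R] (i : ℕ) (g : σ → R) : R :=
  ∑ S ∈ Finset.powersetCard i Finset.univ, ∏ k ∈ S, g k

/-- The ideal generated by `e_i(x) - e_i(y)`, `i = 1,…,n`, in `ℤ[x_1,…,x_n,y_1,…,y_n]`. -/
noncomputable def IA (n : ℕ) : Ideal (MvPolynomial (Fin n ⊕ Fin n) ℤ) :=
  Ideal.span (Set.range fun i : Fin n =>
    eS (i.1 + 1) (fun p : Fin n => (X (Sum.inl p) : MvPolynomial (Fin n ⊕ Fin n) ℤ)) -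
    eS (i.1 + 1) (fun p : Fin n => (X (Sum.inr p) : MvPolynomial (Fin n ⊕ Fin n) ℤ)))

/-- The quotient ring `T^* = ℤ[x,y]/(e_i(x) - e_i(y) : i = 1,…,n)`. -/
abbrev Tq (n : ℕ) : Type := MvPolynomial (Fin n ⊕ Fin n) ℤ ⧸ IA n

/-- The subring of `T^*` generated by the images of `y_1,…,y_n` (equivalently, the `ℤ`-subalgebra
they generate, since any subring contains the image of `ℤ`). -/
noncomputable def Ysub (n : ℕ) : Subalgebra ℤ (Tq n) :=
  Algebra.adjoin ℤ (Set.range fun i : Fin n => Ideal.Quotient.mk (IA n) (X (Sum.inr i)))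

namespace QTA

variable {n : ℕ}

/-- image of `x_p` in the quotient -/
noncomputable def av (p : Fin n) : Tq n := Ideal.Quotient.mk (IA n) (X (Sum.inl p))

/-- image of `y_p` in the quotient -/
noncomputable def bv (p : Fin n) : Tq n := Ideal.Quotient.mk (IA n) (X (Sum.inr p))

lemma eS_ringHom {σ : Type*} [Fintype σ] {R S : Type*} [CommRing R] [CommRing S]
    (f : R →+* S) (i : ℕ) (g : σ → R) : f (eS i g) = eS i (fun k => f (g k)) := by
  simp [eS, map_sum, map_prod]

lemma bv_mem : ∀ p : Fin n, bv p ∈ Ysub n := fun p =>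
  Algebra.subset_adjoin ⟨p, rfl⟩

lemma eS_mem_Ysub (i : ℕ) : eS i (bv (n := n)) ∈ Ysub n := by
  apply Subalgebra.sum_mem
  intro S _
  exact Subalgebra.prod_mem _ fun p _ => bv_mem p

lemma esymm_eq {i : ℕ} (h1 : 1 ≤ i) (h2 : i ≤ n) :
    eS i (av (n := n)) = eS i (bv (n := n)) := by
  have hav : eS i (av (n := n)) =
      Ideal.Quotient.mk (IA n) (eS i fun p : Fin n => X (Sum.inl p)) := by
    rw [eS_ringHom]; rfl
  have hbv : eS i (bv (n := n)) =
      Ideal.Quotient.mk (IA n) (eS i fun p : Fin n => X (Sum.inr p)) := by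
    rw [eS_ringHom]; rfl
  rw [hav, hbv, ← sub_eq_zero, ← map_sub, Ideal.Quotient.eq_zero_iff_mem]
  obtain ⟨i', rfl⟩ : ∃ i', i = i' + 1 := ⟨i - 1, by omega⟩
  apply Ideal.subset_span
  exact ⟨⟨i', by omega⟩, rfl⟩

lemma eS_zero_fun {σ : Type*} [Fintype σ] {R : Type*} [CommRing R] {i : ℕ} (hi : 1 ≤ i) :
    eS i (fun _ : σ => (0 : R)) = 0 := by
  apply Finset.sum_eq_zero
  intro S hS
  rw [Finset.mem_powersetCard] at hS
  obtain ⟨s, hs⟩ : S.Nonempty := Finset.card_pos.mp (by omega)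
  exact Finset.prod_eq_zero hs rfl

lemma IA_ne_top : IA n ≠ ⊤ := by
  intro h
  have h1 : (1 : MvPolynomial (Fin n ⊕ Fin n) ℤ) ∈ IA n := h ▸ Submodule.mem_top
  have hle : IA n ≤ RingHom.ker (MvPolynomial.eval (fun _ : Fin n ⊕ Fin n => (0 : ℤ))) := by
    rw [IA, Ideal.span_le]
    rintro _ ⟨i, rfl⟩
    simp only [SetLike.mem_coe, RingHom.mem_ker, map_sub,
      eS_ringHom (MvPolynomial.eval fun _ => (0:ℤ)) _ _]
    simp [eval_X, eS_zero_fun (Nat.le_add_left 1 i.1)]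
  have := hle h1
  simp [RingHom.mem_ker] at this

instance : Nontrivial (Tq n) := Ideal.Quotient.nontrivial_iff.mpr IA_ne_top

/-- `P_k = ∏_{p ≥ k} (t - x_p)` in `T[t]`. -/
noncomputable def Pk (n k : ℕ) : Polynomial (Tq n) :=
  ∏ p ∈ Finset.univ.filter (fun p : Fin n => k ≤ p.1), (Polynomial.X - Polynomial.C (av p))

lemma Pk_monic (k : ℕ) : (Pk n k).Monic :=
  Polynomial.monic_prod_of_monic _ _ fun _ _ => Polynomial.monic_X_sub_C _

lemma filter_card (k : ℕ) : (Finset.univ.filter (fun p : Fin n => k ≤ p.1)).card = n - k := by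
  rcases lt_or_ge k n with h | h
  · have : Finset.univ.filter (fun p : Fin n => k ≤ p.1) = Finset.Ici ⟨k, h⟩ := by
      ext p; simp [Finset.mem_Ici, Fin.le_def]
    rw [this, Fin.card_Ici]
  · have : Finset.univ.filter (fun p : Fin n => k ≤ p.1) = ∅ := by
      ext p; simp; omega
    rw [this]; simp; omega

lemma Pk_natDegree (k : ℕ) : (Pk n k).natDegree = n - k := by
  rw [Pk, Polynomial.natDegree_prod_of_monic _ _ (fun _ _ => Polynomial.monic_X_sub_C _)]
  rw [Finset.sum_congr rfl (fun p _ => Polynomial.natDegree_X_sub_C (av p)),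
    Finset.sum_const, filter_card, smul_eq_mul, mul_one]

lemma Pk_succ {k : ℕ} (hk : k < n) :
    Pk n k = (Polynomial.X - Polynomial.C (av ⟨k, hk⟩)) * Pk n (k + 1) := by
  rw [Pk, Pk]
  have : Finset.univ.filter (fun p : Fin n => k ≤ p.1) =
      insert ⟨k, hk⟩ (Finset.univ.filter (fun p : Fin n => k + 1 ≤ p.1)) := by
    ext p
    simp only [Finset.mem_filter, Finset.mem_univ, true_and, Finset.mem_insert]
    constructor
    · intro h
      rcases eq_or_lt_of_le h with h' | h'
      · exact Or.inl (Fin.ext h'.symm)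
      · exact Or.inr h'
    · rintro (rfl | h)
      · simp
      · omega
  rw [this, Finset.prod_insert (by simp)]

/-- Vieta for a `Fin n`-indexed product of `X - C (g p)`. -/
lemma prod_coeff (g : Fin n → Tq n) (j : ℕ) (hj : j ≤ n) :
    (∏ p : Fin n, (Polynomial.X - Polynomial.C (g p))).coeff j =
      (-1) ^ (n - j) * eS (n - j) g := by
  have h : ∀ p : Fin n, Polynomial.X - Polynomial.C (g p) =
      Polynomial.X + Polynomial.C (-(g p)) := by intro p; rw [map_neg, sub_eq_add_neg]
  simp_rw [h]
  rw [Finset.prod_X_add_C_coeff _ _ (by simpa using hj)]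
  rw [eS, Finset.mul_sum, Finset.card_univ, Fintype.card_fin]
  apply Finset.sum_congr rfl
  intro S hS
  rw [Finset.mem_powersetCard] at hS
  calc ∏ i ∈ S, -g i
      = ∏ i ∈ S, (-1) * g i := Finset.prod_congr rfl fun i _ => (neg_one_mul (g i)).symm
    _ = (-1) ^ S.card * ∏ k ∈ S, g k := by rw [Finset.prod_mul_distrib, Finset.prod_const]
    _ = (-1) ^ (n - j) * ∏ k ∈ S, g k := by rw [hS.2]

lemma Pk_zero : Pk n 0 = ∏ p : Fin n, (Polynomial.X - Polynomial.C (bv p)) := by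
  have huniv : Finset.univ.filter (fun p : Fin n => 0 ≤ p.1) = Finset.univ := by
    ext p; simp
  rw [Pk, huniv]
  apply Polynomial.ext
  intro j
  rcases le_or_gt j n with hj | hj
  · rw [prod_coeff _ _ hj, prod_coeff _ _ hj]
    rcases Nat.eq_zero_or_pos (n - j) with h0 | h0
    · rw [h0]
      simp [eS]
    · rw [esymm_eq h0 (Nat.sub_le n j)]
  · have hd : ∀ g : Fin n → Tq n,
        (∏ p : Fin n, (Polynomial.X - Polynomial.C (g p))).natDegree = n := by
      intro g
      rw [Polynomial.natDegree_prod_of_monic _ _ (fun _ _ => Polynomial.monic_X_sub_C _),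
        Finset.sum_congr rfl (fun p _ => Polynomial.natDegree_X_sub_C (g p)),
        Finset.sum_const, Finset.card_univ, Fintype.card_fin, smul_eq_mul, mul_one]
    rw [Polynomial.coeff_eq_zero_of_natDegree_lt (by rw [hd]; exact hj),
      Polynomial.coeff_eq_zero_of_natDegree_lt (by rw [hd]; exact hj)]

/-- monomial in the images of the `x` variables -/
noncomputable def mon (e : Fin n → ℕ) : Tq n := ∏ p : Fin n, av p ^ e p

/-- the target submodule -/
noncomputable def M (n : ℕ) : Submodule (Ysub n) (Tq n) :=
  Submodule.span (Ysub n) (mon '' {e | ∀ p : Fin n, e p ≤ n - 1 - p.1})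

lemma mon_mul_mon (e f : Fin n → ℕ) : mon e * mon f = mon (e + f) := by
  simp [mon, ← Finset.prod_mul_distrib, pow_add]

lemma mon_erase (e : Fin n → ℕ) (i : Fin n) :
    mon e = av i ^ e i * ∏ p ∈ Finset.univ.erase i, av p ^ e p :=
  (Finset.mul_prod_erase Finset.univ _ (Finset.mem_univ i)).symm

lemma mon_update (e : Fin n → ℕ) (i : Fin n) (v : ℕ) :
    mon (Function.update e i v) = av i ^ v * ∏ p ∈ Finset.univ.erase i, av p ^ e p := by
  rw [mon_erase (Function.update e i v) i, Function.update_self]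
  congr 1
  apply Finset.prod_congr rfl
  intro p hp
  rw [Function.update_of_ne (Finset.ne_of_mem_erase hp)]

lemma mon_mul_av (e : Fin n → ℕ) (i : Fin n) (c : ℕ) :
    mon e * av i ^ c = mon (Function.update e i (e i + c)) := by
  rw [mon_update, mon_erase e i, pow_add]; ring

lemma mul_mem_span {S : Set (Tq n)} {c z : Tq n} {N : Submodule (Ysub n) (Tq n)}
    (hc : c ∈ Submodule.span (Ysub n) S) (h : ∀ s ∈ S, s * z ∈ N) : c * z ∈ N := by
  induction hc using Submodule.span_induction with
  | mem s hs => exact h s hs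
  | zero => simpa using N.zero_mem
  | add a b _ _ ha hb => rw [add_mul]; exact N.add_mem ha hb
  | smul y a _ ha => rw [smul_mul_assoc]; exact N.smul_mem y ha

lemma one_mem_image {P : (Fin n → ℕ) → Prop} (h : P (fun _ => 0)) :
    (1 : Tq n) ∈ mon '' {e | P e} :=
  ⟨fun _ => 0, h, by simp [mon]⟩

lemma Ysub_mem_span {c : Tq n} (hc : c ∈ Ysub n) {S : Set (Tq n)} (h1 : (1 : Tq n) ∈ S) :
    c ∈ Submodule.span (Ysub n) S := by
  have : c = (⟨c, hc⟩ : Ysub n) • (1 : Tq n) := (mul_one c).symm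
  rw [this]
  exact Submodule.smul_mem _ _ (Submodule.subset_span h1)

/-- structure of the coefficients of `P_k` -/
lemma coeff_Pk_mem : ∀ k : ℕ, k ≤ n → ∀ j : ℕ,
    (Pk n k).coeff j ∈ Submodule.span (Ysub n)
      (mon '' {e | (∀ p : Fin n, e p ≤ n - 1 - p.1) ∧ ∀ p : Fin n, k ≤ p.1 → e p = 0}) := by
  intro k
  induction k with
  | zero =>
    intro _ j
    apply Ysub_mem_span _ (one_mem_image ⟨fun p => Nat.zero_le _, fun p _ => rfl⟩)
    have hmap : Pk n 0 = Polynomial.map (algebraMap (Ysub n) (Tq n))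
        (∏ p : Fin n, (Polynomial.X - Polynomial.C (⟨bv p, bv_mem p⟩ : Ysub n))) := by
      rw [Pk_zero, Polynomial.map_prod]
      apply Finset.prod_congr rfl
      intro p _
      rw [Polynomial.map_sub, Polynomial.map_X, Polynomial.map_C]
      rfl
    rw [hmap, Polynomial.coeff_map]
    exact ((∏ p : Fin n, (Polynomial.X - Polynomial.C
      (⟨bv p, bv_mem p⟩ : Ysub n))).coeff j).2
  | succ k IH =>
    intro hk1 j
    have hk : k < n := hk1
    have inner : ∀ t j : ℕ, n - (k + 1) ≤ j + t →
        (Pk n (k + 1)).coeff j ∈ Submodule.span (Ysub n)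
          (mon '' {e | (∀ p : Fin n, e p ≤ n - 1 - p.1) ∧
            (∀ p : Fin n, k + 1 ≤ p.1 → e p = 0) ∧ e ⟨k, hk⟩ ≤ t}) := by
      intro t
      induction t with
      | zero =>
        intro j hj
        rcases eq_or_lt_of_le hj with h' | h'
        · have hc : (Pk n (k + 1)).coeff j = 1 := by
            have h2 := (Pk_monic (n := n) (k + 1)).coeff_natDegree
            rw [Pk_natDegree] at h2
            rwa [show j = n - (k + 1) by omega]
          rw [hc]
          exact Submodule.subset_span
            (one_mem_image ⟨fun p => Nat.zero_le _, fun p _ => rfl, Nat.le_refl 0⟩)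
        · rw [Polynomial.coeff_eq_zero_of_natDegree_lt (by rw [Pk_natDegree]; omega)]
          exact Submodule.zero_mem _
      | succ t IHt =>
        intro j hj
        by_cases hcase : n - (k + 1) ≤ j + t
        · refine Submodule.span_mono (Set.image_mono ?_) (IHt j hcase)
          rintro e ⟨h1, h2, h3⟩
          exact ⟨h1, h2, h3.trans (Nat.le_succ t)⟩
        · have hrec : (Pk n (k + 1)).coeff j =
              (Pk n k).coeff (j + 1) + av ⟨k, hk⟩ * (Pk n (k + 1)).coeff (j + 1) := by
            have h := congrArg (fun q => Polynomial.coeff q (j + 1)) (Pk_succ hk)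
            simp only [sub_mul, Polynomial.coeff_sub, Polynomial.coeff_X_mul,
              Polynomial.coeff_C_mul] at h
            linear_combination -h
          rw [hrec]
          apply Submodule.add_mem
          · refine Submodule.span_mono (Set.image_mono ?_) (IH (le_of_lt hk) (j + 1))
            rintro e ⟨h1, h2⟩
            exact ⟨h1, fun p hp => h2 p (by omega), by rw [h2 ⟨k, hk⟩ (le_refl k)]; omega⟩
          · rw [mul_comm]
            apply mul_mem_span (IHt (j + 1) (by omega))
            rintro s ⟨e, ⟨h1, h2, h3⟩, rfl⟩
            have : mon e * av ⟨k, hk⟩ = mon (Function.update e ⟨k, hk⟩ (e ⟨k, hk⟩ + 1)) := by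
              rw [← pow_one (av (⟨k, hk⟩ : Fin n)), mon_mul_av]
            rw [this]
            apply Submodule.subset_span
            refine ⟨_, ⟨?_, ?_, ?_⟩, rfl⟩
            · intro p
              rcases eq_or_ne p ⟨k, hk⟩ with rfl | hne
              · rw [Function.update_self]
                have hkk : (⟨k, hk⟩ : Fin n).1 = k := rfl
                rw [hkk]
                omega
              · rw [Function.update_of_ne hne]; exact h1 p
            · intro p hp
              rw [Function.update_of_ne (by intro h; rw [h] at hp; simp at hp)]
              exact h2 p hp
            · rw [Function.update_self]; omega
    refine Submodule.span_mono (Set.image_mono ?_) (inner (n - (k + 1)) j (by omega))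
    rintro e ⟨h1, h2, _⟩
    exact ⟨h1, h2⟩

lemma key_relation {k : ℕ} (hk : k < n) :
    av ⟨k, hk⟩ ^ (n - k) = - ∑ j ∈ Finset.range (n - k), (Pk n k).coeff j * av ⟨k, hk⟩ ^ j := by
  have heval : (Pk n k).eval (av ⟨k, hk⟩) = 0 := by
    rw [Pk, Polynomial.eval_prod]
    apply Finset.prod_eq_zero (i := (⟨k, hk⟩ : Fin n)) (by simp)
    simp
  rw [Polynomial.eval_eq_sum_range, Pk_natDegree, Finset.sum_range_succ] at heval
  have hc : (Pk n k).coeff (n - k) = 1 := by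
    have := (Pk_monic (n := n) k).coeff_natDegree
    rwa [Pk_natDegree] at this
  rw [hc, one_mul] at heval
  linear_combination heval

/-- Main lemma: every monomial in the `x`'s lies in `M`. -/
lemma mon_mem_M : ∀ k : ℕ, k ≤ n →
    ∀ e : Fin n → ℕ, (∀ p : Fin n, k ≤ p.1 → e p ≤ n - 1 - p.1) → mon e ∈ M n := by
  intro k
  induction k with
  | zero =>
    intro _ e he
    exact Submodule.subset_span ⟨e, fun p => he p (Nat.zero_le _), rfl⟩
  | succ k IH =>
    intro hk1
    have hk : k < n := hk1
    suffices H : ∀ m : ℕ, ∀ e : Fin n → ℕ, e ⟨k, hk⟩ < m →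
        (∀ p : Fin n, k + 1 ≤ p.1 → e p ≤ n - 1 - p.1) → mon e ∈ M n by
      intro e he
      exact H (e ⟨k, hk⟩ + 1) e (by omega) he
    intro m
    induction m with
    | zero => intro e h; omega
    | succ m IHm =>
      intro e hem hbound
      by_cases hsmall : e ⟨k, hk⟩ ≤ n - 1 - k
      · apply IH (le_of_lt hk) e
        intro p hp
        rcases eq_or_lt_of_le hp with h' | h'
        · have hp' : p = ⟨k, hk⟩ := Fin.ext h'.symm
          rw [hp']
          exact hsmall
        · exact hbound p h'
      · set i : Fin n := ⟨k, hk⟩ with hi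
        have hik : (i : ℕ) = k := rfl
        have hd : n - k ≤ e i := by omega
        set q := e i - (n - k) with hq
        have hsplit : mon (Function.update e i q) * av i ^ (n - k) = mon e := by
          rw [mon_mul_av, Function.update_idem, Function.update_self,
            show q + (n - k) = e i by omega, Function.update_eq_self]
        have hrel := key_relation hk
        rw [← hi] at hrel
        have hexp : mon e = - ∑ j ∈ Finset.range (n - k),
            (Pk n k).coeff j * mon (Function.update e i (q + j)) := by
          have hs : ∑ j ∈ Finset.range (n - k),
              (Pk n k).coeff j * mon (Function.update e i (q + j)) =
              mon (Function.update e i q) *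
                ∑ j ∈ Finset.range (n - k), (Pk n k).coeff j * av i ^ j := by
            rw [Finset.mul_sum]
            apply Finset.sum_congr rfl
            intro j _
            calc (Pk n k).coeff j * mon (Function.update e i (q + j))
                = (Pk n k).coeff j * (mon (Function.update e i q) * av i ^ j) := by
                  rw [mon_mul_av, Function.update_idem, Function.update_self]
              _ = mon (Function.update e i q) * ((Pk n k).coeff j * av i ^ j) := by ring
          rw [← hsplit, hrel, hs]
          ring
        rw [hexp]
        apply Submodule.neg_mem
        apply Submodule.sum_mem
        intro j hj
        rw [Finset.mem_range] at hj
        apply mul_mem_span (coeff_Pk_mem k (le_of_lt hk) j)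
        rintro s ⟨f, ⟨hf1, hf2⟩, rfl⟩
        rw [mon_mul_mon]
        apply IHm
        · have h0 : f i = 0 := hf2 i (le_of_eq hik.symm)
          simp only [Pi.add_apply, Function.update_self, h0]
          omega
        · intro p hp
          have hpne : p ≠ i := by
            intro h; rw [h, hik] at hp; omega
          simp only [Pi.add_apply, Function.update_of_ne hpne]
          rw [hf2 p (by omega)]
          simpa using hbound p hp

end QTA

/-- `T^*` is generated, as a module over the subring generated by the images of `y_1,…,y_n`,
by the images of the monomials `∏_{p=1}^{n-1} x_p^{i_p}` with `0 ≤ i_p ≤ n - p`.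
(Here the variable `x_p`, `p = 1,…,n`, is indexed by `p - 1 : Fin n`, and the exponent bound
`i_p ≤ n - p` forces exponent `0` on `x_n`, so these are exactly the stated monomials.) -/
theorem quotient_typeA_module_generators (n : ℕ) (hn : 1 ≤ n) :
    Submodule.span (Ysub n)
      ((fun e : Fin n → ℕ =>
          Ideal.Quotient.mk (IA n) (∏ p : Fin n, X (Sum.inl p) ^ e p)) ''
        {e | ∀ p : Fin n, e p ≤ n - (p.1 + 1)}) = ⊤ := by
  have hset : ((fun e : Fin n → ℕ =>
          Ideal.Quotient.mk (IA n) (∏ p : Fin n, X (Sum.inl p) ^ e p)) ''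
        {e | ∀ p : Fin n, e p ≤ n - (p.1 + 1)}) =
      QTA.mon '' {e | ∀ p : Fin n, e p ≤ n - 1 - p.1} := by
    have h1 : {e : Fin n → ℕ | ∀ p : Fin n, e p ≤ n - (p.1 + 1)} =
        {e : Fin n → ℕ | ∀ p : Fin n, e p ≤ n - 1 - p.1} := by
      ext e
      constructor <;> intro h p <;> have := h p <;> omega
    rw [h1]
    apply Set.image_congr
    intro e _
    rw [map_prod]
    simp only [map_pow]
    rfl
  rw [hset]
  rw [Submodule.eq_top_iff']
  intro z
  obtain ⟨f, rfl⟩ := Ideal.Quotient.mk_surjective z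
  show Ideal.Quotient.mk (IA n) f ∈ QTA.M n
  induction f using MvPolynomial.induction_on with
  | C a =>
    apply QTA.Ysub_mem_span _ (QTA.one_mem_image (fun p => Nat.zero_le _))
    have : Ideal.Quotient.mk (IA n) (C a) = algebraMap ℤ (Tq n) a := rfl
    rw [this]
    exact Subalgebra.algebraMap_mem _ a
  | add p q hp hq =>
    rw [map_add]
    exact Submodule.add_mem _ hp hq
  | mul_X p i hp =>
    rw [map_mul]
    cases i with
    | inl j =>
      apply QTA.mul_mem_span hp
      rintro s ⟨e, _, rfl⟩
      show QTA.mon e * QTA.av j ∈ QTA.M n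
      rw [← pow_one (QTA.av j), QTA.mon_mul_av]
      apply QTA.mon_mem_M n (le_refl n)
      intro p' hp'
      omega
    | inr j =>
      have h2 : (⟨QTA.bv j, QTA.bv_mem j⟩ : Ysub n) • Ideal.Quotient.mk (IA n) p =
          Ideal.Quotient.mk (IA n) p * Ideal.Quotient.mk (IA n) (X (Sum.inr j)) := by
        show QTA.bv j * Ideal.Quotient.mk (IA n) p = _
        rw [mul_comm]
        rfl
      rw [← h2]
      exact Submodule.smul_mem _ _ hp
end

section
/- For n = 2, define h : S̃_2 → ℤ[t_1,t_2] by: h(w) = 0 if w(1) = 2, or w(2) = 2, or (w(1),w(2)) = (−2,1); h(w) = −2t_2(t_1−t_2)(t_1+t_2) if (w(1),w(2)) = (1,−2); h(w) = 2t_2²(t_1+t_2) if (w(1),w(2)) = (−1,−2); and h(w) = 2t_1t_2(t_1+t_2) if (w(1),w(2)) = (−2,−1). Then h is an element of H*_T(𝒞_2), it satisfies 2h = (τ_1−t_2)(τ_2−t_2)(τ_1−τ_2+t_1+t_2) in ∏_{w∈S̃_2} ℤ[t_1,t_2], and h does NOT belong to the subring of ∏_{w∈S̃_2} ℤ[t_1,t_2]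 generated by τ_1, τ_2, t_1, t_2. -/
open MvPolynomial

/-- A signed permutation of `{±1,…,±n}` in one-line notation: `w` is determined by the values
`w 0, …, w (n-1)` (representing `w(1),…,w(n)`), which are nonzero integers of absolute value
at most `n` with pairwise distinct absolute values; the condition `w(-i) = -w(i)` determines
the rest of the bijection of `{±1,…,±n}`. -/
def IsSignedPerm {n : ℕ} (w : Fin n → ℤ) : Prop :=
  (∀ i, w i ≠ 0 ∧ (w i).natAbs ≤ n) ∧ Function.Injective fun i => (w i).natAbs

/-- The signed permutation group `S̃_n` (one-line notation). -/
def SP (n : ℕ) : Type := {w : Fin n → ℤ // IsSignedPerm w}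

/-- `t_m` for `m ∈ {±1,…,±n}`, with the convention `t_{-m} = -t_m`. -/
noncomputable def tvar (n : ℕ) (m : ℤ) : Rn n :=
  if h : m.natAbs - 1 < n then C m.sign * X ⟨m.natAbs - 1, h⟩ else 0

/-- Edge of type (1): `w'(i) = ε·w(j)`, `w'(j) = ε·w(i)` (with `ε = ±1`, `i < j`) and
`w'(r) = w(r)` otherwise. -/
def Edge1 {n : ℕ} (w w' : SP n) (i j : Fin n) (ε : ℤ) : Prop :=
  i < j ∧ (ε = 1 ∨ ε = -1) ∧ w'.1 i = ε * w.1 j ∧ w'.1 j = ε * w.1 i ∧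
    ∀ r, r ≠ i → r ≠ j → w'.1 r = w.1 r

/-- Edge of type (2): `w'(i) = -w(i)` and `w'(r) = w(r)` otherwise. -/
def Edge2 {n : ℕ} (w w' : SP n) (i : Fin n) : Prop :=
  w'.1 i = -w.1 i ∧ ∀ r, r ≠ i → w'.1 r = w.1 r

/-- Membership in `H^*_T(𝒞_n)`: `h(w) - h(w')` is divisible by `t_{w(i)} - t_{w'(i)}` for
edges of type (1) and by `2t_{w(i)}` for edges of type (2). -/
def condC (n : ℕ) (h : SP n → Rn n) : Prop :=
  (∀ (w w' : SP n) (i j : Fin n) (ε : ℤ), Edge1 w w' i j ε →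
    (tvar n (w.1 i) - tvar n (w'.1 i)) ∣ h w - h w') ∧
  (∀ (w w' : SP n) (i : Fin n), Edge2 w w' i →
    (2 * tvar n (w.1 i)) ∣ h w - h w')

/-- `τ_i(w) = t_{w(i)}`. -/
noncomputable def tauS (n : ℕ) (i : Fin n) : SP n → Rn n := fun w => tvar n (w.1 i)

/-- The constant function `t_i`. -/
noncomputable def tcS (n : ℕ) (i : Fin n) : SP n → Rn n := fun _ => X i

/-- The element `h` of Example (type `C_2`): in one-line notation (`w 0 = w(1)`, `w 1 = w(2)`,
and `t_1 = X 0`, `t_2 = X 1`),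
`h(v) = 0` if `v(1) = 2`, `v(2) = 2` or `(v(1),v(2)) = (-2,1)`;
`h(v) = -2t_2(t_1-t_2)(t_1+t_2)` if `(v(1),v(2)) = (1,-2)`;
`h(v) = 2t_2²(t_1+t_2)` if `(v(1),v(2)) = (-1,-2)`;
`h(v) = 2t_1t_2(t_1+t_2)` if `(v(1),v(2)) = (-2,-1)`. -/
noncomputable def hEx : SP 2 → Rn 2 := fun w =>
  if w.1 0 = 2 ∨ w.1 1 = 2 ∨ (w.1 0 = -2 ∧ w.1 1 = 1) then 0
  else if w.1 0 = 1 ∧ w.1 1 = -2 then -2 * X 1 * (X 0 - X 1) * (X 0 + X 1)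
  else if w.1 0 = -1 ∧ w.1 1 = -2 then 2 * X 1 ^ 2 * (X 0 + X 1)
  else 2 * X 0 * X 1 * (X 0 + X 1)

lemma tvar_1 : tvar 2 1 = X 0 := by simp [tvar]
lemma tvar_m1 : tvar 2 (-1) = - X 0 := by simp [tvar]
lemma tvar_2 : tvar 2 2 = X 1 := by simp [tvar]
lemma tvar_m2 : tvar 2 (-2) = - X 1 := by simp [tvar]

lemma cases8 (w : SP 2) :
    (w.1 0 = 1 ∧ w.1 1 = 2) ∨ (w.1 0 = 2 ∧ w.1 1 = 1) ∨ (w.1 0 = -1 ∧ w.1 1 = 2) ∨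
    (w.1 0 = 2 ∧ w.1 1 = -1) ∨ (w.1 0 = -2 ∧ w.1 1 = 1) ∨ (w.1 0 = 1 ∧ w.1 1 = -2) ∨
    (w.1 0 = -1 ∧ w.1 1 = -2) ∨ (w.1 0 = -2 ∧ w.1 1 = -1) := by
  obtain ⟨h1, h2⟩ := w.2
  obtain ⟨b0, c0⟩ := h1 0
  obtain ⟨b1, c1⟩ := h1 1
  have hne : (w.1 0).natAbs ≠ (w.1 1).natAbs := fun h => by
    have : (0 : Fin 2) = 1 := h2 h
    simp at this
  set x := w.1 0
  set y := w.1 1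
  have hx : x = 1 ∨ x = -1 ∨ x = 2 ∨ x = -2 := by omega
  have hy : y = 1 ∨ y = -1 ∨ y = 2 ∨ y = -2 := by omega
  rcases hx with h|h|h|h <;> rcases hy with h2|h2|h2|h2 <;> rw [h, h2] at hne ⊢ <;> simp_all

lemma hEx_val (w : SP 2) (a b : ℤ) (ha : w.1 0 = a) (hb : w.1 1 = b) :
    hEx w = if a = 2 ∨ b = 2 ∨ (a = -2 ∧ b = 1) then 0
      else if a = 1 ∧ b = -2 then -2 * X 1 * (X 0 - X 1) * (X 0 + X 1)
      else if a = -1 ∧ b = -2 then 2 * X 1 ^ 2 * (X 0 + X 1)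
      else 2 * X 0 * X 1 * (X 0 + X 1) := by
  simp only [hEx, ha, hb]

instance : DecidablePred (@IsSignedPerm 2) := fun w => by
  unfold IsSignedPerm Function.Injective; infer_instance

def wA : SP 2 := ⟨![1, 2], by decide⟩
def wC : SP 2 := ⟨![-1, 2], by decide⟩
def wF : SP 2 := ⟨![1, -2], by decide⟩
def wG : SP 2 := ⟨![-1, -2], by decide⟩

def Good (f : SP 2 → Rn 2) : Prop :=
  ∃ c d e g : Rn 2, f wA = c + d + e + g ∧ f wC = c - d + e - g ∧
    f wF = c + d - e - g ∧ f wG = c - d - e + g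

set_option maxHeartbeats 4000000 in
/-- `h ∈ H^*_T(𝒞_2)`, `2h = (τ_1 - t_2)(τ_2 - t_2)(τ_1 - τ_2 + t_1 + t_2)` in
`∏_{w ∈ S̃_2} ℤ[t_1,t_2]`, and `h` does not belong to the subring generated by
`τ_1, τ_2, t_1, t_2`. -/
theorem example_typeC_not_generated :
    condC 2 hEx ∧
    (2 : SP 2 → Rn 2) * hEx =
      (tauS 2 0 - tcS 2 1) * (tauS 2 1 - tcS 2 1) *
        (tauS 2 0 - tauS 2 1 + tcS 2 0 + tcS 2 1) ∧
    hEx ∉ (Subring.closure {tauS 2 0, tauS 2 1, tcS 2 0, tcS 2 1} :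
      Subring (SP 2 → Rn 2)) := by
  refine ⟨⟨?_, ?_⟩, ?_, ?_⟩
  · -- Edge1
    rintro w w' ⟨iv, hi⟩ ⟨jv, hj⟩ ε ⟨hij, hε, h0, h1, -⟩
    have hij' : iv < jv := hij
    obtain rfl : iv = 0 := by omega
    obtain rfl : jv = 1 := by omega
    simp only [Fin.mk_zero, Fin.mk_one] at h0 h1 ⊢
    rcases hε with rfl | rfl <;>
    rcases cases8 w with ⟨a0, a1⟩|⟨a0, a1⟩|⟨a0, a1⟩|⟨a0, a1⟩|⟨a0, a1⟩|⟨a0, a1⟩|⟨a0, a1⟩|⟨a0, a1⟩ <;>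
    rw [a0] at h1 <;> rw [a1] at h0 <;> norm_num at h0 h1 <;>
    rw [hEx_val w _ _ a0 a1, hEx_val w' _ _ h0 h1, a0, h0] <;>
    norm_num [tvar_1, tvar_m1, tvar_2, tvar_m2] <;>
    first
      | (refine ⟨0, ?_⟩; ring1)
      | (refine ⟨-2 * X 0 * X 1, ?_⟩; ring1)
      | (refine ⟨2 * X 0 * X 1, ?_⟩; ring1)
      | (refine ⟨-2 * X 1 ^ 2, ?_⟩; ring1)
      | (refine ⟨2 * X 1 ^ 2, ?_⟩; ring1)
      | (refine ⟨-2 * X 1 * (X 0 + X 1), ?_⟩; ring1)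
      | (refine ⟨2 * X 1 * (X 0 + X 1), ?_⟩; ring1)
      | (refine ⟨-2 * X 1 * (X 0 - X 1), ?_⟩; ring1)
      | (refine ⟨2 * X 1 * (X 0 - X 1), ?_⟩; ring1)
  · -- Edge2
    rintro w w' ⟨iv, hi⟩ ⟨h0, h1⟩
    have hiv : iv = 0 ∨ iv = 1 := by omega
    rcases hiv with rfl | rfl
    · simp only [Fin.mk_zero] at h0 ⊢
      have h1' := h1 1 (by simp [Fin.ext_iff])
      rcases cases8 w with ⟨a0, a1⟩|⟨a0, a1⟩|⟨a0, a1⟩|⟨a0, a1⟩|⟨a0, a1⟩|⟨a0, a1⟩|⟨a0, a1⟩|⟨a0, a1⟩ <;>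
      rw [a0] at h0 <;> rw [a1] at h1' <;> (try norm_num at h0) <;>
      rw [hEx_val w _ _ a0 a1, hEx_val w' _ _ h0 h1', a0] <;>
      norm_num [tvar_1, tvar_m1, tvar_2, tvar_m2] <;>
      first
        | (refine ⟨0, ?_⟩; ring1)
        | (refine ⟨-(X 0) * (X 0 + X 1), ?_⟩; ring1)
        | (refine ⟨X 0 * (X 0 + X 1), ?_⟩; ring1)
        | (refine ⟨-(X 1) * (X 0 + X 1), ?_⟩; ring1)
        | (refine ⟨X 1 * (X 0 + X 1), ?_⟩; ring1)
        | (refine ⟨(X 0 - X 1) * (X 0 + X 1), ?_⟩; ring1)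
        | (refine ⟨-((X 0 - X 1) * (X 0 + X 1)), ?_⟩; ring1)
    · simp only [Fin.mk_one] at h0 ⊢
      have h1' := h1 0 (by simp [Fin.ext_iff])
      rcases cases8 w with ⟨a0, a1⟩|⟨a0, a1⟩|⟨a0, a1⟩|⟨a0, a1⟩|⟨a0, a1⟩|⟨a0, a1⟩|⟨a0, a1⟩|⟨a0, a1⟩ <;>
      rw [a1] at h0 <;> rw [a0] at h1' <;> (try norm_num at h0) <;>
      rw [hEx_val w _ _ a0 a1, hEx_val w' _ _ h1' h0, a1] <;>
      norm_num [tvar_1, tvar_m1, tvar_2, tvar_m2] <;>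
      first
        | (refine ⟨0, ?_⟩; ring1)
        | (refine ⟨-(X 0) * (X 0 + X 1), ?_⟩; ring1)
        | (refine ⟨X 0 * (X 0 + X 1), ?_⟩; ring1)
        | (refine ⟨-(X 1) * (X 0 + X 1), ?_⟩; ring1)
        | (refine ⟨X 1 * (X 0 + X 1), ?_⟩; ring1)
        | (refine ⟨(X 0 - X 1) * (X 0 + X 1), ?_⟩; ring1)
        | (refine ⟨-((X 0 - X 1) * (X 0 + X 1)), ?_⟩; ring1)
  · -- product formula
    funext w
    rcases cases8 w with ⟨a0, a1⟩|⟨a0, a1⟩|⟨a0, a1⟩|⟨a0, a1⟩|⟨a0, a1⟩|⟨a0, a1⟩|⟨a0, a1⟩|⟨a0, a1⟩ <;>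
    simp only [Pi.mul_apply, Pi.add_apply, Pi.sub_apply, Pi.ofNat_apply, tauS, tcS,
      hEx_val w _ _ a0 a1, a0, a1, tvar_1, tvar_m1, tvar_2, tvar_m2] <;>
    norm_num <;> ring
  · -- not in the subring
    intro hmem
    have good : Good hEx := by
      refine Subring.closure_induction (fun x hx => ?_) ?_ ?_ ?_ ?_ ?_ hmem
      · rcases hx with rfl | rfl | rfl | rfl
        · exact ⟨0, X 0, 0, 0, by simp [tauS, wA, wC, wF, wG, tvar_1, tvar_m1]⟩
        · exact ⟨0, 0, X 1, 0, by simp [tauS, wA, wC, wF, wG, tvar_2, tvar_m2]⟩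
        · exact ⟨X 0, 0, 0, 0, by simp [tcS]⟩
        · exact ⟨X 1, 0, 0, 0, by simp [tcS]⟩
      · exact ⟨0, 0, 0, 0, by simp⟩
      · exact ⟨1, 0, 0, 0, by simp⟩
      · rintro x y - - ⟨c, d, e, g, h1, h2, h3, h4⟩ ⟨c', d', e', g', k1, k2, k3, k4⟩
        refine ⟨c + c', d + d', e + e', g + g', ?_, ?_, ?_, ?_⟩ <;>
          simp only [Pi.add_apply, h1, h2, h3, h4, k1, k2, k3, k4] <;> ring
      · rintro x - ⟨c, d, e, g, h1, h2, h3, h4⟩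
        refine ⟨-c, -d, -e, -g, ?_, ?_, ?_, ?_⟩ <;>
          simp only [Pi.neg_apply, h1, h2, h3, h4] <;> ring
      · rintro x y - - ⟨c, d, e, g, h1, h2, h3, h4⟩ ⟨c', d', e', g', k1, k2, k3, k4⟩
        refine ⟨c*c' + d*d' + e*e' + g*g', c*d' + d*c' + e*g' + g*e',
               c*e' + e*c' + d*g' + g*d', c*g' + g*c' + d*e' + e*d', ?_, ?_, ?_, ?_⟩ <;>
          simp only [Pi.mul_apply, h1, h2, h3, h4, k1, k2, k3, k4] <;> ring
    obtain ⟨c, d, e, g, h1, h2, h3, h4⟩ := good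
    have vA : hEx wA = 0 := by rw [hEx_val wA 1 2 rfl rfl]; norm_num
    have vC : hEx wC = 0 := by rw [hEx_val wC (-1) 2 rfl rfl]; norm_num
    have vF : hEx wF = -2 * X 1 * (X 0 - X 1) * (X 0 + X 1) := by
      rw [hEx_val wF 1 (-2) rfl rfl]; norm_num
    have vG : hEx wG = 2 * X 1 ^ 2 * (X 0 + X 1) := by
      rw [hEx_val wG (-1) (-2) rfl rfl]; norm_num
    rw [vA] at h1; rw [vC] at h2; rw [vF] at h3; rw [vG] at h4
    have key : (4 : Rn 2) * c =
        -2 * X 1 * (X 0 - X 1) * (X 0 + X 1) + 2 * X 1 ^ 2 * (X 0 + X 1) := by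
      linear_combination -h1 - h2 - h3 - h4
    let φ : Rn 2 →+* Polynomial (ZMod 4) :=
      (MvPolynomial.eval₂Hom (Int.castRingHom (Polynomial (ZMod 4)))
        (fun i => if i = 0 then Polynomial.X else 1))
    have hφ := congrArg φ key
    have hX0 : φ (X 0) = Polynomial.X := by simp [φ]
    have hX1 : φ (X 1) = 1 := by simp [φ]
    have hm2 : φ (-2 : Rn 2) = -2 := by simp [φ]
    have h2' : φ (2 : Rn 2) = 2 := by simp [φ]
    have h4' : φ (4 : Rn 2) = 4 := by simp [φ]
    simp only [map_mul, map_add, map_sub, map_pow, hX0, hX1, hm2, h2', h4'] at hφ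
    have h40 : (4 : Polynomial (ZMod 4)) = 0 := by
      rw [show (4 : Polynomial (ZMod 4)) = Polynomial.C 4 from (map_ofNat Polynomial.C 4).symm,
        show (4 : ZMod 4) = 0 by decide, map_zero]
    have hr : (-2 * 1 * (Polynomial.X - 1) * (Polynomial.X + 1) + 2 * 1 ^ 2 *
        (Polynomial.X + 1) : Polynomial (ZMod 4)) = 2 * Polynomial.X ^ 2 + 2 * Polynomial.X := by
      linear_combination (1 - Polynomial.X ^ 2) * h40
    rw [h40, zero_mul, hr] at hφ
    have hc := congrArg (fun p => Polynomial.coeff p 1) hφ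
    simp [Polynomial.coeff_X, Polynomial.coeff_X_pow, Polynomial.coeff_ofNat_mul] at hc
    exact absurd hc (by decide)
end

section
/- For every i ∈ {1,…,n} and every w ∈ S̃_n, the polynomial e_i(t_{w(1)},…,t_{w(n)}) − e_i(t_1,…,t_n) is divisible by 2 in ℤ[t_1,…,t_n], and the resulting function f_i : w ↦ (e_i(t_{w(1)},…,t_{w(n)}) − e_i(t_1,…,t_n))/2 is an element of H*_T(𝔅_n) which is homogeneous of degree 2i. -/
open MvPolynomial

/-- Membership in `H^*_T(𝔅_n)`: `h(w) - h(w')` is divisible by `t_{w(i)} - t_{w'(i)}` for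
edges of type (1) and by `t_{w(i)}` for edges of type (2). -/
def condB (n : ℕ) (h : SP n → Rn n) : Prop :=
  (∀ (w w' : SP n) (i j : Fin n) (ε : ℤ), Edge1 w w' i j ε →
    (tvar n (w.1 i) - tvar n (w'.1 i)) ∣ h w - h w') ∧
  (∀ (w w' : SP n) (i : Fin n), Edge2 w w' i →
    (tvar n (w.1 i)) ∣ h w - h w')

/-- `e_i(t_{w(1)},…,t_{w(n)}) - e_i(t_1,…,t_n)`. -/
noncomputable def diffS (n : ℕ) (i : ℕ) (w : SP n) : Rn n :=
  eS i (fun k => tvar n (w.1 k)) - eS i (fun k : Fin n => (X k : Rn n))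


section aux
open Finset

variable {σ : Type*} [Fintype σ] [DecidableEq σ] {R : Type*} [CommRing R]

lemma eS_sub_one (i : ℕ) (g g' : σ → R) (p : σ) (hgg' : ∀ r, r ≠ p → g r = g' r) :
    eS i g - eS i g' = (g p - g' p) *
      ∑ S ∈ (Finset.powersetCard i (univ : Finset σ)).filter (fun S => p ∈ S),
        ∏ k ∈ S.erase p, g k := by
  have h2 : ∑ S ∈ (powersetCard i (univ : Finset σ)).filter (fun S => ¬ p ∈ S),
      (∏ k ∈ S, g k - ∏ k ∈ S, g' k) = 0 := by
    refine Finset.sum_eq_zero fun S hS => ?_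
    have hp : p ∉ S := (mem_filter.mp hS).2
    rw [Finset.prod_congr rfl (fun k hk => hgg' k (fun h => hp (h ▸ hk))), sub_self]
  have h1 : ∑ S ∈ (powersetCard i (univ : Finset σ)).filter (fun S => p ∈ S),
      (∏ k ∈ S, g k - ∏ k ∈ S, g' k)
      = (g p - g' p) * ∑ S ∈ (powersetCard i (univ : Finset σ)).filter (fun S => p ∈ S),
          ∏ k ∈ S.erase p, g k := by
    rw [Finset.mul_sum]
    refine Finset.sum_congr rfl fun S hS => ?_
    have hp : p ∈ S := (mem_filter.mp hS).2
    have he : ∀ k ∈ S.erase p, g' k = g k := fun k hk => (hgg' k (Finset.ne_of_mem_erase hk)).symm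
    rw [← Finset.mul_prod_erase S g hp, ← Finset.mul_prod_erase S g' hp,
      Finset.prod_congr rfl he]
    ring
  calc eS i g - eS i g'
      = ∑ S ∈ powersetCard i (univ : Finset σ), (∏ k ∈ S, g k - ∏ k ∈ S, g' k) := by
        unfold eS; rw [Finset.sum_sub_distrib]
    _ = _ := by
        rw [← Finset.sum_filter_add_sum_filter_not (powersetCard i (univ : Finset σ))
          (fun S => p ∈ S), h1, h2, add_zero]

end aux

section aux
open Finset

variable {σ : Type*} [Fintype σ] [DecidableEq σ] {R : Type*} [CommRing R]

lemma eS_comp_equiv (i : ℕ) (g : σ → R) (e : σ ≃ σ) :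
    eS i (fun k => g (e k)) = eS i g := by
  unfold eS
  refine Finset.sum_nbij' (fun S => S.map e.toEmbedding) (fun S => S.map e.symm.toEmbedding)
    ?_ ?_ ?_ ?_ ?_
  · intro S hS
    rw [Finset.mem_powersetCard_univ] at *
    rw [Finset.card_map]; exact hS
  · intro S hS
    rw [Finset.mem_powersetCard_univ] at *
    rw [Finset.card_map]; exact hS
  · intro S _
    ext a
    simp
  · intro S _
    ext a
    simp
  · intro S _
    rw [Finset.prod_map]
    rfl

lemma eS_sub_two (i : ℕ) (g g' : σ → R) (p q : σ) (hpq : p ≠ q)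
    (hgg' : ∀ r, r ≠ p → r ≠ q → g r = g' r) (hprod : g p * g q = g' p * g' q) :
    eS i g - eS i g' = ((g p - g' p) + (g q - g' q)) *
      ∑ S ∈ (Finset.powersetCard i (univ : Finset σ)).filter (fun S => p ∈ S ∧ q ∉ S),
        ∏ k ∈ S.erase p, g k := by
  set P := Finset.powersetCard i (univ : Finset σ) with hP
  -- the four pieces
  have hboth : ∑ S ∈ P.filter (fun S => p ∈ S ∧ q ∈ S), (∏ k ∈ S, g k - ∏ k ∈ S, g' k) = 0 := by
    refine Finset.sum_eq_zero fun S hS => ?_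
    obtain ⟨-, hp, hq⟩ := Finset.mem_filter.mp hS
    have hq' : q ∈ S.erase p := Finset.mem_erase.mpr ⟨Ne.symm hpq, hq⟩
    have he : ∀ k ∈ (S.erase p).erase q, g' k = g k := by
      intro k hk
      have h1 := Finset.ne_of_mem_erase hk
      have h2 := Finset.ne_of_mem_erase (Finset.mem_of_mem_erase hk)
      exact (hgg' k h2 h1).symm
    rw [← Finset.mul_prod_erase S g hp, ← Finset.mul_prod_erase (S.erase p) g hq',
      ← Finset.mul_prod_erase S g' hp, ← Finset.mul_prod_erase (S.erase p) g' hq',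
      Finset.prod_congr rfl he]
    linear_combination (∏ k ∈ (S.erase p).erase q, g k) * hprod
  have hneither : ∑ S ∈ P.filter (fun S => p ∉ S ∧ q ∉ S),
      (∏ k ∈ S, g k - ∏ k ∈ S, g' k) = 0 := by
    refine Finset.sum_eq_zero fun S hS => ?_
    obtain ⟨-, hp, hq⟩ := Finset.mem_filter.mp hS
    rw [Finset.prod_congr rfl
      (fun k hk => hgg' k (fun h => hp (h ▸ hk)) (fun h => hq (h ▸ hk))), sub_self]
  have hponly : ∑ S ∈ P.filter (fun S => p ∈ S ∧ q ∉ S), (∏ k ∈ S, g k - ∏ k ∈ S, g' k)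
      = (g p - g' p) * ∑ S ∈ P.filter (fun S => p ∈ S ∧ q ∉ S), ∏ k ∈ S.erase p, g k := by
    rw [Finset.mul_sum]
    refine Finset.sum_congr rfl fun S hS => ?_
    obtain ⟨-, hp, hq⟩ := Finset.mem_filter.mp hS
    have he : ∀ k ∈ S.erase p, g' k = g k := fun k hk =>
      (hgg' k (Finset.ne_of_mem_erase hk)
        (fun h => hq (h ▸ Finset.mem_of_mem_erase hk))).symm
    rw [← Finset.mul_prod_erase S g hp, ← Finset.mul_prod_erase S g' hp,
      Finset.prod_congr rfl he]
    ring
  have hqonly : ∑ S ∈ P.filter (fun S => p ∉ S ∧ q ∈ S), (∏ k ∈ S, g k - ∏ k ∈ S, g' k)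
      = (g q - g' q) * ∑ S ∈ P.filter (fun S => p ∈ S ∧ q ∉ S), ∏ k ∈ S.erase p, g k := by
    have hbij : ∑ S ∈ P.filter (fun S => p ∉ S ∧ q ∈ S), ∏ k ∈ S.erase q, g k
        = ∑ S ∈ P.filter (fun S => p ∈ S ∧ q ∉ S), ∏ k ∈ S.erase p, g k := by
      refine Finset.sum_nbij' (fun S => insert p (S.erase q)) (fun S => insert q (S.erase p))
        ?_ ?_ ?_ ?_ ?_
      · intro S hS
        obtain ⟨hScard, hp, hq⟩ := Finset.mem_filter.mp hS
        rw [Finset.mem_powersetCard_univ] at hScard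
        have hpE : p ∉ S.erase q := fun h => hp (Finset.mem_of_mem_erase h)
        refine Finset.mem_filter.mpr ⟨?_, Finset.mem_insert_self _ _, ?_⟩
        · rw [Finset.mem_powersetCard_univ, Finset.card_insert_of_notMem hpE,
            Finset.card_erase_of_mem hq, hScard]
          have : 1 ≤ i := by
            rw [← hScard]
            exact Finset.card_pos.mpr ⟨q, hq⟩
          omega
        · intro h
          rcases Finset.mem_insert.mp h with h | h
          · exact hpq h.symm
          · exact (Finset.notMem_erase q S) h
      · intro S hS
        obtain ⟨hScard, hp, hq⟩ := Finset.mem_filter.mp hS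
        rw [Finset.mem_powersetCard_univ] at hScard
        have hqE : q ∉ S.erase p := fun h => hq (Finset.mem_of_mem_erase h)
        refine Finset.mem_filter.mpr ⟨?_, ?_, Finset.mem_insert_self _ _⟩
        · rw [Finset.mem_powersetCard_univ, Finset.card_insert_of_notMem hqE,
            Finset.card_erase_of_mem hp, hScard]
          have : 1 ≤ i := by
            rw [← hScard]
            exact Finset.card_pos.mpr ⟨p, hp⟩
          omega
        · intro h
          rcases Finset.mem_insert.mp h with h | h
          · exact hpq h
          · exact (Finset.notMem_erase p S) h
      · intro S hS
        obtain ⟨-, hp, hq⟩ := Finset.mem_filter.mp hS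
        have hpE : p ∉ S.erase q := fun h => hp (Finset.mem_of_mem_erase h)
        show insert q ((insert p (S.erase q)).erase p) = S
        rw [Finset.erase_insert hpE, Finset.insert_erase hq]
      · intro S hS
        obtain ⟨-, hp, hq⟩ := Finset.mem_filter.mp hS
        have hqE : q ∉ S.erase p := fun h => hq (Finset.mem_of_mem_erase h)
        show insert p ((insert q (S.erase p)).erase q) = S
        rw [Finset.erase_insert hqE, Finset.insert_erase hp]
      · intro S hS
        obtain ⟨-, hp, -⟩ := Finset.mem_filter.mp hS
        have hpE : p ∉ S.erase q := fun h => hp (Finset.mem_of_mem_erase h)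
        rw [Finset.erase_insert hpE]
    rw [← hbij, Finset.mul_sum]
    refine Finset.sum_congr rfl fun S hS => ?_
    obtain ⟨-, hp, hq⟩ := Finset.mem_filter.mp hS
    have he : ∀ k ∈ S.erase q, g' k = g k := fun k hk =>
      (hgg' k (fun h => hp (h ▸ Finset.mem_of_mem_erase hk))
        (Finset.ne_of_mem_erase hk)).symm
    rw [← Finset.mul_prod_erase S g hq, ← Finset.mul_prod_erase S g' hq,
      Finset.prod_congr rfl he]
    ring
  -- assemble
  have hsplit : ∑ S ∈ P, (∏ k ∈ S, g k - ∏ k ∈ S, g' k)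
      = ∑ S ∈ P.filter (fun S => p ∈ S ∧ q ∈ S), (∏ k ∈ S, g k - ∏ k ∈ S, g' k)
      + ∑ S ∈ P.filter (fun S => p ∈ S ∧ q ∉ S), (∏ k ∈ S, g k - ∏ k ∈ S, g' k)
      + (∑ S ∈ P.filter (fun S => p ∉ S ∧ q ∈ S), (∏ k ∈ S, g k - ∏ k ∈ S, g' k)
      + ∑ S ∈ P.filter (fun S => p ∉ S ∧ q ∉ S), (∏ k ∈ S, g k - ∏ k ∈ S, g' k)) := by
    rw [← Finset.sum_filter_add_sum_filter_not P (fun S => p ∈ S)]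
    congr 1
    · rw [← Finset.sum_filter_add_sum_filter_not (P.filter (fun S => p ∈ S)) (fun S => q ∈ S),
        Finset.filter_filter, Finset.filter_filter]
    · rw [← Finset.sum_filter_add_sum_filter_not (P.filter (fun S => ¬ p ∈ S)) (fun S => q ∈ S),
        Finset.filter_filter, Finset.filter_filter]
  calc eS i g - eS i g'
      = ∑ S ∈ P, (∏ k ∈ S, g k - ∏ k ∈ S, g' k) := by
        unfold eS; rw [Finset.sum_sub_distrib]
    _ = _ := by rw [hsplit, hboth, hneither, hponly, hqonly]; ring

end aux

section helper

set_option linter.unusedSectionVars false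

lemma tvar_neg (n : ℕ) (m : ℤ) : tvar n (-m) = - tvar n m := by
  unfold tvar
  simp only [Int.natAbs_neg, Int.sign_neg, map_neg, neg_mul]
  split_ifs with h
  · rfl
  · rw [neg_zero]

lemma tvar_isHomogeneous (n : ℕ) (m : ℤ) : (tvar n m).IsHomogeneous 1 := by
  unfold tvar
  split_ifs with h
  · simpa using (isHomogeneous_C (Fin n) (m.sign : ℤ)).mul (isHomogeneous_X ℤ _)
  · exact isHomogeneous_zero _ _ _

lemma eS_isHomogeneous {σ τ : Type*} [Fintype σ] {R : Type*} [CommRing R] (i : ℕ)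
    (g : σ → MvPolynomial τ R) (hg : ∀ k, (g k).IsHomogeneous 1) :
    (eS i g).IsHomogeneous i := by
  unfold eS
  refine MvPolynomial.IsHomogeneous.sum _ _ _ fun S hS => ?_
  have := MvPolynomial.IsHomogeneous.prod S g (fun _ => 1) (fun k _ => hg k)
  rwa [Finset.sum_const, smul_eq_mul, mul_one, Finset.mem_powersetCard_univ.mp hS] at this

lemma rn_two_ne_zero (n : ℕ) : (2 : Rn n) ≠ 0 := two_ne_zero

end helper


/-- For each `i = 1,…,n`: the polynomial `e_i(t_{w(1)},…,t_{w(n)}) - e_i(t_1,…,t_n)` is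
divisible by `2` in `ℤ[t_1,…,t_n]` for every `w ∈ S̃_n`, and the resulting function
`f_i = (e_i(t_w) - e_i(t))/2` (i.e. the unique `f` with `2·f(w)` equal to this difference)
belongs to `H^*_T(𝔅_n)` and is homogeneous of degree `2i` (each value is homogeneous of
degree `i`). -/
theorem f_welldefined_typeB (n : ℕ) (hn : 1 ≤ n) (i : ℕ) (hi1 : 1 ≤ i) (hin : i ≤ n) :
    (∀ w : SP n, ∃ g : Rn n, diffS n i w = 2 * g) ∧
    ∀ f : SP n → Rn n, (∀ w, 2 * f w = diffS n i w) →
      condB n f ∧ ∀ w, (f w).IsHomogeneous i := by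
  constructor
  · -- divisibility by 2
    intro w
    have hlt : ∀ k, (w.1 k).natAbs - 1 < n := by
      intro k
      have h1 := (w.2.1 k).1
      have h2 := (w.2.1 k).2
      have h3 : (w.1 k).natAbs ≠ 0 := fun h => h1 (Int.natAbs_eq_zero.mp h)
      omega
    set σf : Fin n → Fin n := fun k => ⟨(w.1 k).natAbs - 1, hlt k⟩ with hσf
    have htvar : ∀ k, tvar n (w.1 k) = C ((w.1 k).sign) * X (σf k) := fun k => dif_pos (hlt k)
    have hinj : Function.Injective σf := by
      intro a b hab
      apply w.2.2
      have h1 : (w.1 a).natAbs - 1 = (w.1 b).natAbs - 1 := congrArg Fin.val hab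
      have ha : (w.1 a).natAbs ≠ 0 := fun h => (w.2.1 a).1 (Int.natAbs_eq_zero.mp h)
      have hb : (w.1 b).natAbs ≠ 0 := fun h => (w.2.1 b).1 (Int.natAbs_eq_zero.mp h)
      simp only
      omega
    have hX : eS i (fun k => (X (σf k) : Rn n)) = eS i (fun k : Fin n => (X k : Rn n)) :=
      eS_comp_equiv i (fun k : Fin n => (X k : Rn n))
        (Equiv.ofBijective σf (Finite.injective_iff_bijective.mp hinj))
    have hrw : diffS n i w = ∑ S ∈ Finset.powersetCard i (Finset.univ : Finset (Fin n)),
        (C (∏ k ∈ S, (w.1 k).sign) - 1) * ∏ k ∈ S, (X (σf k) : Rn n) := by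
      calc diffS n i w
          = eS i (fun k => tvar n (w.1 k)) - eS i (fun k => (X (σf k) : Rn n)) := by
            unfold diffS; rw [hX]
        _ = ∑ S ∈ Finset.powersetCard i (Finset.univ : Finset (Fin n)),
            (∏ k ∈ S, (C ((w.1 k).sign) * X (σf k) : Rn n) - ∏ k ∈ S, (X (σf k) : Rn n)) := by
            unfold eS
            rw [← Finset.sum_sub_distrib]
            exact Finset.sum_congr rfl fun S _ => by
              rw [Finset.prod_congr rfl fun k _ => htvar k]
        _ = _ := by
            refine Finset.sum_congr rfl fun S _ => ?_
            rw [Finset.prod_mul_distrib, ← map_prod C (fun k => (w.1 k).sign) S]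
            ring
    have hdvd : (2 : Rn n) ∣ diffS n i w := by
      rw [hrw]
      refine Finset.dvd_sum fun S _ => Dvd.dvd.mul_right ?_ _
      have hodd : Odd (∏ k ∈ S, (w.1 k).sign) := by
        refine Finset.prod_induction _ Odd (fun a b => Odd.mul) odd_one fun k _ => ?_
        rcases lt_trichotomy (w.1 k) 0 with h | h | h
        · rw [Int.sign_eq_neg_one_of_neg h]; exact ⟨-1, by ring⟩
        · exact absurd h (w.2.1 k).1
        · rw [Int.sign_eq_one_of_pos h]; exact odd_one
      obtain ⟨c, hc⟩ := hodd
      refine ⟨C c, ?_⟩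
      rw [hc]
      rw [map_add, map_mul, map_one]
      rw [show (C (2:ℤ) : Rn n) = 2 from by simp]
      ring
    exact hdvd
  · intro f hf
    have hcancel : ∀ a b : Rn n, 2 * a = 2 * b → a = b :=
      fun a b h => mul_left_cancel₀ (rn_two_ne_zero n) h
    have hdiff : ∀ w w' : SP n, diffS n i w - diffS n i w'
        = eS i (fun k => tvar n (w.1 k)) - eS i (fun k => tvar n (w'.1 k)) := by
      intro w w'
      unfold diffS
      rw [sub_sub_sub_cancel_right]
    refine ⟨⟨?_, ?_⟩, ?_⟩
    · -- type 1 edges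
      intro w w' p q ε h1
      obtain ⟨hpq, hε, heq_p, heq_q, hr⟩ := h1
      have hpq' : p ≠ q := ne_of_lt hpq
      rcases hε with rfl | rfl
      · rw [one_mul] at heq_p heq_q
        obtain ⟨E, hE⟩ : ∃ E, eS i (fun k => tvar n (w.1 k)) - eS i (fun k => tvar n (w'.1 k))
            = ((tvar n (w.1 p) - tvar n (w'.1 p)) + (tvar n (w.1 q) - tvar n (w'.1 q))) * E :=
          ⟨_, eS_sub_two i (fun k => tvar n (w.1 k)) (fun k => tvar n (w'.1 k)) p q hpq'
            (fun r h1 h2 => show tvar n (w.1 r) = tvar n (w'.1 r) by rw [hr r h1 h2])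
            (show tvar n (w.1 p) * tvar n (w.1 q) = tvar n (w'.1 p) * tvar n (w'.1 q) by
              rw [heq_p, heq_q]; ring)⟩
        have hz : 2 * (f w - f w') = 2 * 0 := by
          rw [mul_sub, hf w, hf w', hdiff, hE, heq_p, heq_q]
          ring
        rw [hcancel _ _ hz]
        exact dvd_zero _
      · rw [neg_one_mul] at heq_p heq_q
        obtain ⟨E, hE⟩ : ∃ E, eS i (fun k => tvar n (w.1 k)) - eS i (fun k => tvar n (w'.1 k))
            = ((tvar n (w.1 p) - tvar n (w'.1 p)) + (tvar n (w.1 q) - tvar n (w'.1 q))) * E :=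
          ⟨_, eS_sub_two i (fun k => tvar n (w.1 k)) (fun k => tvar n (w'.1 k)) p q hpq'
            (fun r h1 h2 => show tvar n (w.1 r) = tvar n (w'.1 r) by rw [hr r h1 h2])
            (show tvar n (w.1 p) * tvar n (w.1 q) = tvar n (w'.1 p) * tvar n (w'.1 q) by rw [heq_p, heq_q, tvar_neg, tvar_neg]; ring)⟩
        have h3 : 2 * (f w - f w') = 2 * ((tvar n (w.1 p) - tvar n (w'.1 p)) * E) := by
          rw [mul_sub, hf w, hf w', hdiff, hE, heq_p, heq_q, tvar_neg, tvar_neg]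
          ring
        exact ⟨E, hcancel _ _ h3⟩
    · -- type 2 edges
      intro w w' p h2
      obtain ⟨hp, hr⟩ := h2
      obtain ⟨E, hE⟩ : ∃ E, eS i (fun k => tvar n (w.1 k)) - eS i (fun k => tvar n (w'.1 k))
          = (tvar n (w.1 p) - tvar n (w'.1 p)) * E :=
        ⟨_, eS_sub_one i (fun k => tvar n (w.1 k)) (fun k => tvar n (w'.1 k)) p
          (fun r hrp => show tvar n (w.1 r) = tvar n (w'.1 r) by rw [hr r hrp])⟩
      have h3 : 2 * (f w - f w') = 2 * (tvar n (w.1 p) * E) := by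
        rw [mul_sub, hf w, hf w', hdiff, hE, hp, tvar_neg]
        ring
      exact ⟨E, hcancel _ _ h3⟩
    · -- homogeneity
      intro w
      have hdh : (diffS n i w).IsHomogeneous i := by
        have h1 : (eS i (fun k => tvar n (w.1 k))).IsHomogeneous i :=
          eS_isHomogeneous i _ (fun k => tvar_isHomogeneous n _)
        have h2 : (eS i (fun k : Fin n => (X k : Rn n))).IsHomogeneous i :=
          eS_isHomogeneous i _ (fun k => isHomogeneous_X ℤ k)
        exact h1.sub h2
      intro d hd
      refine hdh ?_
      rw [← hf w, show ((2 : Rn n)) = C 2 from by simp, coeff_C_mul]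
      exact mul_ne_zero two_ne_zero hd
end

section
/- In H*_T(𝔅_n), for every k = 1,…,n, ∑_{j=1}^{2k} (−1)^j f_j·(f_{2k−j} + e_{2k−j}(t)) = 0, where e_ℓ(t) denotes the constant function w ↦ e_ℓ(t_1,…,t_n), and with the conventions f_0 := 0, e_0(t) := 1, f_ℓ := 0 for ℓ > n and e_ℓ(t) := 0 for ℓ > n. -/
open MvPolynomial

/- ---------- auxiliary lemmas ---------- -/

/-- generating polynomial of elementary symmetric functions -/
noncomputable def genP {σ : Type*} [Fintype σ] {R : Type*} [CommRing R] (g : σ → R) :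
    Polynomial R :=
  ∏ i : σ, (1 + Polynomial.C (g i) * Polynomial.X)

lemma genP_coeff {σ : Type*} [Fintype σ] [DecidableEq σ] {R : Type*} [CommRing R]
    (g : σ → R) (j : ℕ) : (genP g).coeff j = eS j g := by
  unfold genP eS
  have : (∏ i : σ, (1 + Polynomial.C (g i) * Polynomial.X)) =
      ∑ t ∈ (Finset.univ : Finset σ).powerset,
        Polynomial.C (∏ i ∈ t, g i) * Polynomial.X ^ t.card := by
    have hc : (∏ i : σ, (1 + Polynomial.C (g i) * Polynomial.X)) =
        ∏ i : σ, (Polynomial.C (g i) * Polynomial.X + 1) :=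
      Finset.prod_congr rfl fun i _ => add_comm _ _
    rw [hc, Finset.prod_add]
    refine Finset.sum_congr rfl fun t _ => ?_
    rw [Finset.prod_const_one, mul_one, Finset.prod_mul_distrib, Finset.prod_const, map_prod]
  rw [this, Polynomial.finset_sum_coeff]
  rw [Finset.powersetCard_eq_filter, Finset.sum_filter]
  refine Finset.sum_congr rfl fun t _ => ?_
  rw [Polynomial.coeff_C_mul, Polynomial.coeff_X_pow]
  by_cases h : t.card = j
  · simp [h]
  · rw [if_neg (fun hh => h hh.symm), mul_zero, if_neg h]

lemma eS_neg {σ : Type*} [Fintype σ] {R : Type*} [CommRing R] (g : σ → R) (j : ℕ) :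
    eS j (fun i => -g i) = (-1) ^ j * eS j g := by
  unfold eS
  rw [Finset.mul_sum]
  refine Finset.sum_congr rfl fun t ht => ?_
  have hc : t.card = j := (Finset.mem_powersetCard.mp ht).2
  rw [← hc]
  rw [← Finset.prod_const (-1 : R), ← Finset.prod_mul_distrib]
  simp

lemma eS_zero {σ : Type*} [Fintype σ] {R : Type*} [CommRing R] (g : σ → R) :
    eS 0 g = 1 := by
  simp [eS]

lemma genP_mul_neg {σ : Type*} [Fintype σ] {R : Type*} [CommRing R] (g : σ → R) :
    genP g * genP (fun i => -g i) = ∏ i : σ, (1 - Polynomial.C (g i ^ 2) * Polynomial.X ^ 2) := by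
  unfold genP
  rw [← Finset.prod_mul_distrib]
  refine Finset.prod_congr rfl fun i _ => ?_
  simp only [map_neg, map_pow]
  ring

lemma sign_sq (m : ℤ) (h : m ≠ 0) : m.sign ^ 2 = 1 := by
  rcases m with (_ | k) | k
  · exact absurd rfl h
  · simp [Int.sign]
  · simp [Int.sign]

/-- The relation `∑_{j=1}^{2k} (-1)^j f_j (f_{2k-j} + e_{2k-j}(t)) = 0` in `H^*_T(𝔅_n)` for
`k = 1,…,n`.  The family `f` is characterized by `2·f i w = e_i(t_w) - e_i(t)` for all `i`
(this forces the conventions `f_0 = 0` and `f_ℓ = 0` for `ℓ > n`, and `eS` satisfies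
`e_0(t) = 1` and `e_ℓ(t) = 0` for `ℓ > n`). -/
theorem f_relation_typeB (n : ℕ) (hn : 1 ≤ n)
    (f : ℕ → SP n → Rn n) (hf : ∀ i w, 2 * f i w = diffS n i w) :
    ∀ k, 1 ≤ k → k ≤ n → ∀ w : SP n,
      ∑ j ∈ Finset.Icc 1 (2 * k),
        (-1 : Rn n) ^ j * f j w * (f (2 * k - j) w + eS (2 * k - j) (fun r : Fin n => (X r : Rn n)))
        = 0 := by
  intro k hk1 hkn w
  set a : Fin n → Rn n := fun i => tvar n (w.1 i) with ha
  set b : Fin n → Rn n := fun r => (X r : Rn n) with hb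
  set A : ℕ → Rn n := fun j => eS j a with hA
  set B : ℕ → Rn n := fun j => eS j b with hB
  -- squares of signed variables are a permutation of squares of variables
  have hwi : ∀ i, (w.1 i).natAbs - 1 < n := fun i => by
    have h1 := (w.2.1 i).1; have h2 := (w.2.1 i).2
    have : (w.1 i).natAbs ≠ 0 := Int.natAbs_ne_zero.mpr h1
    omega
  let σf : Fin n → Fin n := fun i => ⟨(w.1 i).natAbs - 1, hwi i⟩
  have hσinj : Function.Injective σf := by
    intro i j hij
    apply w.2.2
    have h1 := (w.2.1 i).1
    have h2 := (w.2.1 j).1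
    have hi : (w.1 i).natAbs ≠ 0 := Int.natAbs_ne_zero.mpr h1
    have hj : (w.1 j).natAbs ≠ 0 := Int.natAbs_ne_zero.mpr h2
    have := congrArg Fin.val hij
    simp only [σf] at this
    simp only []
    omega
  let e : Fin n ≃ Fin n := Equiv.ofBijective σf
    ((Fintype.bijective_iff_injective_and_card σf).mpr ⟨hσinj, rfl⟩)
  have hsq : ∀ i, a i ^ 2 = b (e i) ^ 2 := by
    intro i
    show tvar n (w.1 i) ^ 2 = (X (σf i) : Rn n) ^ 2
    rw [tvar, dif_pos (hwi i)]
    rw [mul_pow, ← map_pow, sign_sq _ (w.2.1 i).1]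
    simp [σf]
  -- the two generating products agree
  have hprod : genP a * genP (fun i => -a i) = genP b * genP (fun i => -b i) := by
    rw [genP_mul_neg, genP_mul_neg]
    calc ∏ i : Fin n, (1 - Polynomial.C (a i ^ 2) * Polynomial.X ^ 2)
        = ∏ i : Fin n, (1 - Polynomial.C (b (e i) ^ 2) * Polynomial.X ^ 2) := by
          refine Finset.prod_congr rfl fun i _ => by rw [hsq i]
      _ = ∏ i : Fin n, (1 - Polynomial.C (b i ^ 2) * Polynomial.X ^ 2) :=
          Equiv.prod_comp e (fun i => 1 - Polynomial.C (b i ^ 2) * Polynomial.X ^ 2)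
  -- convolution identity
  have hconv : ∀ g : Fin n → Rn n,
      (genP g * genP (fun i => -g i)).coeff (2 * k) =
        ∑ j ∈ Finset.range (2 * k + 1), (-1) ^ (2 * k - j) * (eS j g * eS (2 * k - j) g) := by
    intro g
    rw [Polynomial.coeff_mul, Finset.Nat.sum_antidiagonal_eq_sum_range_succ_mk]
    refine Finset.sum_congr rfl fun j _ => ?_
    rw [genP_coeff, genP_coeff, eS_neg]
    ring
  have h1 : ∑ j ∈ Finset.range (2 * k + 1), (-1 : Rn n) ^ (2 * k - j) * (A j * A (2 * k - j)) =
      ∑ j ∈ Finset.range (2 * k + 1), (-1 : Rn n) ^ (2 * k - j) * (B j * B (2 * k - j)) := by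
    rw [← hconv a, ← hconv b, hprod]
  -- sign simplification: for j ≤ 2k, (-1)^(2k-j) = (-1)^j
  have hsign : ∀ j, j ∈ Finset.range (2 * k + 1) → ((-1 : Rn n) ^ (2 * k - j) = (-1) ^ j) := by
    intro j hj
    rw [Finset.mem_range] at hj
    have h2 : 2 * k - j + j = 2 * k := by omega
    have : ((-1 : Rn n) ^ (2 * k - j)) * (-1) ^ j = ((-1) ^ j) * (-1) ^ j := by
      rw [← pow_add, ← pow_add, h2, ← two_mul]
      rw [pow_mul, pow_mul]
      norm_num
    have hu : ((-1 : Rn n) ^ j) * ((-1) ^ j) = 1 := by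
      rw [← pow_add, ← two_mul, pow_mul]; norm_num
    calc (-1 : Rn n) ^ (2 * k - j) = (-1) ^ (2 * k - j) * (((-1 : Rn n) ^ j) * ((-1) ^ j)) := by
          rw [hu, mul_one]
      _ = ((-1) ^ j * (-1) ^ j) * (-1) ^ j := by rw [← mul_assoc, this]
      _ = (-1) ^ j := by rw [hu, one_mul]
  have h1' : ∑ j ∈ Finset.range (2 * k + 1), (-1 : Rn n) ^ j * (A j * A (2 * k - j)) =
      ∑ j ∈ Finset.range (2 * k + 1), (-1 : Rn n) ^ j * (B j * B (2 * k - j)) := by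
    calc ∑ j ∈ Finset.range (2 * k + 1), (-1 : Rn n) ^ j * (A j * A (2 * k - j))
        = ∑ j ∈ Finset.range (2 * k + 1), (-1 : Rn n) ^ (2 * k - j) * (A j * A (2 * k - j)) :=
          Finset.sum_congr rfl fun j hj => by rw [hsign j hj]
      _ = ∑ j ∈ Finset.range (2 * k + 1), (-1 : Rn n) ^ (2 * k - j) * (B j * B (2 * k - j)) := h1
      _ = ∑ j ∈ Finset.range (2 * k + 1), (-1 : Rn n) ^ j * (B j * B (2 * k - j)) :=
          Finset.sum_congr rfl fun j hj => by rw [hsign j hj]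
  -- cross-term symmetry
  have h2 : ∑ j ∈ Finset.range (2 * k + 1), (-1 : Rn n) ^ j * (A j * B (2 * k - j)) =
      ∑ j ∈ Finset.range (2 * k + 1), (-1 : Rn n) ^ j * (B j * A (2 * k - j)) := by
    rw [← Finset.sum_range_reflect (fun j => (-1 : Rn n) ^ j * (A j * B (2 * k - j))) (2 * k + 1)]
    refine Finset.sum_congr rfl fun j hj => ?_
    rw [Finset.mem_range] at hj
    have e1 : 2 * k + 1 - 1 - j = 2 * k - j := by omega
    have e2 : 2 * k - (2 * k - j) = j := by omega
    rw [e1, e2]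
    have : (-1 : Rn n) ^ (2 * k - j) = (-1) ^ j := hsign j (Finset.mem_range.mpr hj)
    rw [this]
    ring
  -- the big sum over range (2k+1)
  have hbig : ∑ j ∈ Finset.range (2 * k + 1),
      (-1 : Rn n) ^ j * ((A j - B j) * (A (2 * k - j) + B (2 * k - j))) = 0 := by
    have expand : ∀ j, (-1 : Rn n) ^ j * ((A j - B j) * (A (2 * k - j) + B (2 * k - j))) =
        ((-1) ^ j * (A j * A (2 * k - j)) - (-1) ^ j * (B j * B (2 * k - j))) +
        ((-1) ^ j * (A j * B (2 * k - j)) - (-1) ^ j * (B j * A (2 * k - j))) := fun j => by ring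
    rw [Finset.sum_congr rfl fun j _ => expand j]
    rw [Finset.sum_add_distrib, Finset.sum_sub_distrib, Finset.sum_sub_distrib, h1', h2]
    ring
  -- relate to the target: multiply target by 4
  have hA0 : A 0 = 1 := eS_zero a
  have hB0 : B 0 = 1 := eS_zero b
  have hsplit : Finset.range (2 * k + 1) = insert 0 (Finset.Icc 1 (2 * k)) := by
    ext j
    simp only [Finset.mem_range, Finset.mem_insert, Finset.mem_Icc]
    omega
  have h0notin : (0 : ℕ) ∉ Finset.Icc 1 (2 * k) := by simp
  have hIcc : ∑ j ∈ Finset.Icc 1 (2 * k),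
      (-1 : Rn n) ^ j * ((A j - B j) * (A (2 * k - j) + B (2 * k - j))) = 0 := by
    have := hbig
    rw [hsplit, Finset.sum_insert h0notin] at this
    rw [hA0, hB0] at this
    simpa using this
  -- now each term of the target times 4 equals the corresponding term
  have hterm : ∀ j, (4 : Rn n) * ((-1 : Rn n) ^ j * f j w * (f (2 * k - j) w + B (2 * k - j))) =
      (-1 : Rn n) ^ j * ((A j - B j) * (A (2 * k - j) + B (2 * k - j))) := by
    intro j
    have e1 : (2 : Rn n) * f j w = A j - B j := hf j w
    have e2 : (2 : Rn n) * f (2 * k - j) w = A (2 * k - j) - B (2 * k - j) := hf (2 * k - j) w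
    calc (4 : Rn n) * ((-1 : Rn n) ^ j * f j w * (f (2 * k - j) w + B (2 * k - j)))
        = (-1 : Rn n) ^ j * ((2 * f j w) * ((2 * f (2 * k - j) w) + 2 * B (2 * k - j))) := by
          ring
      _ = (-1 : Rn n) ^ j * ((A j - B j) * ((A (2 * k - j) - B (2 * k - j)) + 2 * B (2 * k - j))) := by
          rw [e1, e2]
      _ = (-1 : Rn n) ^ j * ((A j - B j) * (A (2 * k - j) + B (2 * k - j))) := by ring
  have h4 : (4 : Rn n) * ∑ j ∈ Finset.Icc 1 (2 * k),
      (-1 : Rn n) ^ j * f j w * (f (2 * k - j) w + B (2 * k - j)) = 0 := by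
    rw [Finset.mul_sum, Finset.sum_congr rfl fun j _ => hterm j, hIcc]
  have h4ne : (4 : Rn n) ≠ 0 := by norm_num
  have := mul_eq_zero.mp h4
  rcases this with h | h
  · exact absurd h h4ne
  · exact h
end
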